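/- arXiv:1004.1979 — 11 statements merged into one kernel-verified Lean document; each statement's English description precedes it below -/
import Mathlib

section
/- Let g ≥ 0, n ≥ 0, and α₁,…,αₙ ≥ 2 be integers, and let r be a positive integer. Suppose there exist integers b, k₁,…,kₙ and integers β₁,…,βₙ with 1 ≤ βⱼ ≤ αⱼ−1 such that r·b = 2g−2−∑ⱼ kⱼ and r·βⱼ = αⱼ−1+kⱼ·αⱼ for all j. Then r is coprime to each αⱼ and r divides the integer α₁⋯αₙ·(2−2g−n) + ∑ⱼ α₁⋯αₙ/αⱼ. -/
theorem raymond_vasquez_forward (g n : ℕ) (α : Fin n → ℕ) (hα : ∀ j, 2 ≤ α j)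
    (r : ℕ) (hr : 0 < r) (b : ℤ) (k β : Fin n → ℤ)
    (hβ : ∀ j, 1 ≤ β j ∧ β j ≤ (α j : ℤ) - 1)
    (h1 : (r : ℤ) * b = 2 * (g : ℤ) - 2 - ∑ j, k j)
    (h2 : ∀ j, (r : ℤ) * β j = (α j : ℤ) - 1 + k j * (α j : ℤ)) :
    (∀ j, Nat.Coprime r (α j)) ∧
      (r : ℤ) ∣ ((∏ j, (α j : ℤ)) * (2 - 2 * (g : ℤ) - (n : ℤ)) +
        ∑ j, ∏ i ∈ Finset.univ.erase j, (α i : ℤ)) := by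
  constructor
  · intro j
    have hd1 : ((Nat.gcd r (α j) : ℤ)) ∣ (r : ℤ) := Int.natCast_dvd_natCast.mpr (Nat.gcd_dvd_left _ _)
    have hd2 : ((Nat.gcd r (α j) : ℤ)) ∣ ((α j : ℤ)) := Int.natCast_dvd_natCast.mpr (Nat.gcd_dvd_right _ _)
    have hone : ((Nat.gcd r (α j) : ℤ)) ∣ 1 := by
      have : (1 : ℤ) = (α j : ℤ) * (1 + k j) - (r : ℤ) * β j := by linarith [h2 j]
      rw [this]
      exact dvd_sub (hd2.mul_right _) (hd1.mul_right _)
    exact Nat.dvd_one.mp (Int.natCast_dvd_natCast.mp hone)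
  · refine ⟨-b * ∏ j, (α j : ℤ) - ∑ j, β j * ∏ i ∈ Finset.univ.erase j, (α i : ℤ), ?_⟩
    have key : ∀ j : Fin n, (∏ i ∈ Finset.univ.erase j, (α i : ℤ)) - ∏ i, (α i : ℤ)
        = -((r : ℤ) * (β j * ∏ i ∈ Finset.univ.erase j, (α i : ℤ))) + k j * ∏ i, (α i : ℤ) := by
      intro j
      have hp := Finset.prod_erase_mul Finset.univ (fun i => (α i : ℤ)) (Finset.mem_univ j)
      rw [← hp]
      linear_combination (∏ i ∈ Finset.univ.erase j, (α i : ℤ)) * h2 j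
    calc (∏ j, (α j : ℤ)) * (2 - 2 * (g : ℤ) - (n : ℤ)) +
        ∑ j, ∏ i ∈ Finset.univ.erase j, (α i : ℤ)
        = (∏ j, (α j : ℤ)) * (2 - 2 * (g : ℤ)) +
          ∑ j, ((∏ i ∈ Finset.univ.erase j, (α i : ℤ)) - ∏ i, (α i : ℤ)) := by
          rw [Finset.sum_sub_distrib, Finset.sum_const, Finset.card_univ, Fintype.card_fin]
          push_cast
          ring
      _ = (∏ j, (α j : ℤ)) * (2 - 2 * (g : ℤ)) +
          ∑ j, (-((r : ℤ) * (β j * ∏ i ∈ Finset.univ.erase j, (α i : ℤ))) + k j * ∏ i, (α i : ℤ)) := by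
          rw [Finset.sum_congr rfl fun j _ => key j]
      _ = (∏ j, (α j : ℤ)) * (2 - 2 * (g : ℤ)) +
          (-((r : ℤ) * ∑ j, β j * ∏ i ∈ Finset.univ.erase j, (α i : ℤ)) +
            (∑ j, k j) * ∏ i, (α i : ℤ)) := by
          rw [Finset.sum_add_distrib, Finset.sum_neg_distrib, ← Finset.mul_sum, ← Finset.sum_mul]
      _ = (r : ℤ) * (-b * ∏ j, (α j : ℤ) - ∑ j, β j * ∏ i ∈ Finset.univ.erase j, (α i : ℤ)) := by
          linear_combination (∏ j, (α j : ℤ)) * h1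
end

section
/- Let g ≥ 0, n ≥ 0, and α₁,…,αₙ ≥ 2 be integers, and let r be a positive integer such that r is coprime to each αⱼ and r divides the integer α₁⋯αₙ·(2−2g−n) + ∑ⱼ α₁⋯αₙ/αⱼ. Then there exist integers b, k₁,…,kₙ and integers β₁,…,βₙ with 1 ≤ βⱼ ≤ αⱼ−1 such that r·b = 2g−2−∑ⱼ kⱼ and r·βⱼ = αⱼ−1+kⱼ·αⱼ for all j. -/
theorem raymond_vasquez_converse (g n : ℕ) (α : Fin n → ℕ) (hα : ∀ j, 2 ≤ α j)
    (r : ℕ) (hr : 0 < r)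
    (hcop : ∀ j, Nat.Coprime r (α j))
    (hdvd : (r : ℤ) ∣ ((∏ j, (α j : ℤ)) * (2 - 2 * (g : ℤ) - (n : ℤ)) +
      ∑ j, ∏ i ∈ Finset.univ.erase j, (α i : ℤ))) :
    ∃ (b : ℤ) (k β : Fin n → ℤ),
      (∀ j, 1 ≤ β j ∧ β j ≤ (α j : ℤ) - 1) ∧
      (r : ℤ) * b = 2 * (g : ℤ) - 2 - ∑ j, k j ∧
      (∀ j, (r : ℤ) * β j = (α j : ℤ) - 1 + k j * (α j : ℤ)) := by
  classical
  have hαpos : ∀ j, (0:ℤ) < (α j : ℤ) := fun j => by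
    exact_mod_cast lt_of_lt_of_le (by norm_num) (hα j)
  set β : Fin n → ℤ := fun j => (-(Nat.gcdA r (α j))) % (α j) with hβdef
  -- key divisibility : α j ∣ r * β j + 1
  have hmod : ∀ j, ((α j : ℤ)) ∣ (r : ℤ) * β j + 1 := by
    intro j
    have hgcd : (1 : ℤ) = r * Nat.gcdA r (α j) + (α j) * Nat.gcdB r (α j) := by
      have := Nat.gcd_eq_gcd_ab r (α j)
      rwa [hcop j, Nat.cast_one] at this
    have h1 : ((α j : ℤ)) ∣ β j - (-(Nat.gcdA r (α j))) := by
      refine ⟨-((-(Nat.gcdA r (α j))) / (α j)), ?_⟩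
      have := Int.emod_add_mul_ediv (-(Nat.gcdA r (α j))) (α j)
      simp only [hβdef]
      linarith
    have h2 : (r : ℤ) * β j + 1 =
        (r : ℤ) * (β j - (-(Nat.gcdA r (α j)))) + (α j) * Nat.gcdB r (α j) := by
      rw [hgcd]; ring
    rw [h2]
    exact dvd_add (Dvd.dvd.mul_left h1 _) (dvd_mul_right _ _)
  have hβ0 : ∀ j, 0 ≤ β j := fun j => Int.emod_nonneg _ (ne_of_gt (hαpos j))
  have hβlt : ∀ j, β j < (α j : ℤ) := fun j => Int.emod_lt_of_pos _ (hαpos j)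
  have hβ1 : ∀ j, 1 ≤ β j := by
    intro j
    rcases lt_or_eq_of_le (hβ0 j) with h | h
    · exact h
    · exfalso
      have := hmod j
      rw [← h, mul_zero, zero_add] at this
      have := Int.le_of_dvd one_pos this
      have h2 : (2:ℤ) ≤ (α j : ℤ) := by exact_mod_cast hα j
      omega
  set k : Fin n → ℤ := fun j => ((r : ℤ) * β j + 1) / (α j) - 1 with hkdef
  have hkey : ∀ j, (r : ℤ) * β j = (α j : ℤ) - 1 + k j * (α j : ℤ) := by
    intro j
    have h := Int.ediv_mul_cancel (hmod j)
    simp only [hkdef]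
    nlinarith [h]
  -- divisibility for b
  set A : ℤ := ∏ j, (α j : ℤ) with hAdef
  set Aj : Fin n → ℤ := fun j => ∏ i ∈ Finset.univ.erase j, (α i : ℤ) with hAjdef
  have hAj : ∀ j, (α j : ℤ) * Aj j = A := fun j => by
    simpa [hAdef, hAjdef] using Finset.mul_prod_erase Finset.univ (fun i => ((α i : ℤ))) (Finset.mem_univ j)
  have hAk : ∀ j ∈ Finset.univ, A * k j = Aj j * ((r:ℤ) * β j) + Aj j - A := by
    intro j _
    have h1 := hkey j
    have h2 := hAj j
    linear_combination (-(Aj j)) * h1 - (k j + 1) * h2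
  have hmain : A * (2 * (g:ℤ) - 2 - ∑ j, k j) =
      (-1) * (A * (2 - 2 * (g : ℤ) - (n : ℤ)) + ∑ j, Aj j) + (r:ℤ) * (- ∑ j, Aj j * β j) := by
    rw [mul_sub, Finset.mul_sum, Finset.sum_congr rfl hAk]
    rw [Finset.sum_sub_distrib, Finset.sum_add_distrib, Finset.sum_const, Finset.card_univ,
      Fintype.card_fin, nsmul_eq_mul]
    have hs : ∑ x, Aj x * ((r:ℤ) * β x) = (r:ℤ) * ∑ x, Aj x * β x := by
      rw [Finset.mul_sum]
      exact Finset.sum_congr rfl (fun x _ => by ring)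
    rw [hs]
    ring
  have hdvd2 : (r : ℤ) ∣ A * (2 * (g:ℤ) - 2 - ∑ j, k j) := by
    rw [hmain]
    exact dvd_add (Dvd.dvd.mul_left hdvd _) (dvd_mul_right _ _)
  have hcopA : IsCoprime (r : ℤ) A := by
    have h : Nat.Coprime r (∏ j, α j) := Nat.Coprime.prod_right fun j _ => hcop j
    have := Nat.isCoprime_iff_coprime.mpr h
    simpa [hAdef, Nat.cast_prod] using this
  have hdvd3 : (r : ℤ) ∣ (2 * (g:ℤ) - 2 - ∑ j, k j) :=
    hcopA.dvd_of_dvd_mul_left hdvd2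
  refine ⟨(2 * (g:ℤ) - 2 - ∑ j, k j) / r, k, β, fun j => ⟨hβ1 j, by have := hβlt j; omega⟩,
    Int.mul_ediv_cancel' hdvd3, hkey⟩
end

section
/- Fix r ≥ 1 and g ≥ 1. Define transformations on (ℤ/r)^{2g} (viewed as tuples (s₁,t₁,…,s_g,t_g)): Uᵢ : (…,sᵢ,tᵢ,…) ↦ (…,sᵢ,tᵢ−sᵢ,…), Vᵢ : (…,sᵢ,tᵢ,…) ↦ (…,sᵢ+tᵢ,tᵢ,…), and Wᵢ : (…,sᵢ,tᵢ,s_{i+1},t_{i+1},…) ↦ (…,sᵢ,tᵢ−sᵢ+s_{i+1}−1,s_{i+1},t_{i+1}+sᵢ−s_{i+1}+1,…) for 1 ≤ i ≤ g−1. Then for g ≥ 2 and r odd, the group generated by the Uᵢ, Vᵢ, Wᵢ and their inverses acts transitively on (ℤ/r)^{2g}. -/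
/-- An `r`-th root, written as a tuple `(s₁,t₁,…,s_g,t_g)` in `(ℤ/r)^{2g}`,
encoded as a function `Fin g → ZMod r × ZMod r`. -/
abbrev RootTuple (r g : ℕ) := Fin g → ZMod r × ZMod r

/-- One application of a basic Dehn twist `Uᵢ`, `Vᵢ` or `W_{i,i+1}`. -/
def dehnStep (r g : ℕ) (δ δ' : RootTuple r g) : Prop :=
  (∃ i : Fin g, δ' = Function.update δ i ((δ i).1, (δ i).2 - (δ i).1)) ∨
  (∃ i : Fin g, δ' = Function.update δ i ((δ i).1 + (δ i).2, (δ i).2)) ∨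
  (∃ (i : Fin g) (hi : (i : ℕ) + 1 < g),
    δ' = Function.update
      (Function.update δ i
        ((δ i).1, (δ i).2 - (δ i).1 + (δ ⟨i + 1, hi⟩).1 - 1))
      ⟨i + 1, hi⟩
      ((δ ⟨i + 1, hi⟩).1, (δ ⟨i + 1, hi⟩).2 + (δ i).1 - (δ ⟨i + 1, hi⟩).1 + 1))

/-!
On a single handle, `U` and `V` generate the action of `SL₂(ℤ)` on `(sᵢ, tᵢ)`, so Euclid's
algorithm brings every `sᵢ` to `0`. When `sᵢ = s_{i+1} = 0`, `Wᵢ^c` moves `c` from `tᵢ` to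
`t_{i+1}`, and `(V U V)² = -1` negates `tᵢ`. Moving `x` over, negating `tᵢ` and moving it over as
well turns `(tᵢ, t_{i+1}) = (a, b)` into `(0, b - a + 2x)`; since `2` is a unit modulo odd `r`,
`x` can be chosen to clear both handles. As `g ≥ 2`, every handle has a neighbour, so every
tuple is equivalent to `0`.
-/

open Function Relation

theorem Relation.EqvGen.of_forall_int_succ {α : Type*} {R : α → α → Prop} (F : ℤ → α)
    (h : ∀ n, R (F n) (F (n + 1))) (a b : ℤ) : EqvGen R (F a) (F b) := by
  have from_zero (n : ℤ) : EqvGen R (F 0) (F n) := by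
    induction n using Int.induction_on with
    | zero => exact .refl _
    | succ n ih => exact ih.trans _ _ _ (.rel _ _ (h n))
    | pred n ih => exact ih.trans _ _ _ (.symm _ _ (.rel _ _ (by simpa using h (-n - 1))))
  exact (from_zero a).symm.trans _ _ _ (from_zero b)

theorem Relation.EqvGen.map {α β : Type*} {R : α → α → Prop} {S : β → β → Prop} (f : α → β)
    (hf : ∀ a b, R a b → S (f a) (f b)) {a b : α} (h : EqvGen R a b) :
    EqvGen S (f a) (f b) := by
  induction h with
  | rel a b hab => exact .rel _ _ (hf a b hab)
  | refl a => exact .refl _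
  | symm a b _ ih => exact ih.symm
  | trans a b c _ _ ihab ihbc => exact ihab.trans _ _ _ ihbc

theorem Relation.EqvGen.exists_forall_of_update {ι β : Type*} [Finite ι] [DecidableEq ι]
    {R : (ι → β) → (ι → β) → Prop} (Q : (ι → β) → Prop) (p : β → Prop)
    (h : ∀ f, Q f → ∀ i, ∃ b, p b ∧ Q (update f i b) ∧ EqvGen R f (update f i b))
    {f : ι → β} (hf : Q f) : ∃ f', Q f' ∧ (∀ i, p (f' i)) ∧ EqvGen R f f' := by
  have := Fintype.ofFinite ι
  suffices ∀ s : Finset ι, ∃ f', Q f' ∧ (∀ i ∈ s, p (f' i)) ∧ EqvGen R f f' by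
    simpa using this Finset.univ
  intro s
  induction s using Finset.induction_on with
  | empty => exact ⟨f, hf, by simp, .refl f⟩
  | insert a s _ ih =>
    obtain ⟨f', hQ, hp, hf'⟩ := ih
    obtain ⟨b, hb, hQb, hfb⟩ := h f' hQ a
    refine ⟨_, hQb, fun i hi => ?_, hf'.trans _ _ _ hfb⟩
    rcases eq_or_ne i a with rfl | hia
    · simpa using hb
    · simpa [hia] using hp i (by simpa [hia] using hi)

theorem Fin.exists_adjacent_of_two_le {g : ℕ} (hg : 2 ≤ g) (i : Fin g) :
    ∃ j k : Fin g, (j : ℕ) + 1 = k ∧ (i = j ∨ i = k) := by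
  by_cases h : (i : ℕ) + 1 < g
  · exact ⟨i, ⟨i + 1, h⟩, rfl, Or.inl rfl⟩
  · exact ⟨⟨i - 1, by omega⟩, i, by simp; omega, Or.inr rfl⟩

inductive PairTwist (r : ℕ) : ZMod r × ZMod r → ZMod r × ZMod r → Prop
  | u (p : ZMod r × ZMod r) : PairTwist r p (p.1, p.2 - p.1)
  | v (p : ZMod r × ZMod r) : PairTwist r p (p.1 + p.2, p.2)

namespace PairTwist

variable {r : ℕ}

theorem eqvGen_u_pow (p : ZMod r × ZMod r) (c : ZMod r) :
    EqvGen (PairTwist r) p (p.1, p.2 - c * p.1) := by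
  obtain ⟨n, rfl⟩ := ZMod.intCast_surjective c
  have step (m : ℤ) : PairTwist r (p.1, p.2 - m * p.1) (p.1, p.2 - (m + 1 : ℤ) * p.1) := by
    convert u (p.1, p.2 - m * p.1) using 2
    push_cast
    ring
  simpa using EqvGen.of_forall_int_succ (fun m : ℤ => (p.1, p.2 - m * p.1)) step 0 n

theorem eqvGen_swap (p : ZMod r × ZMod r) : EqvGen (PairTwist r) p (p.2, -p.1) := by
  have h₁ := EqvGen.rel _ _ (v p)
  have h₂ := EqvGen.rel _ _ (u (p.1 + p.2, p.2))
  have h₃ := EqvGen.rel _ _ (v (p.1 + p.2, p.2 - (p.1 + p.2)))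
  convert h₁.trans _ _ _ (h₂.trans _ _ _ h₃) using 2 <;> ring

theorem eqvGen_neg (p : ZMod r × ZMod r) : EqvGen (PairTwist r) p (-p) :=
  (eqvGen_swap p).trans _ _ _ (eqvGen_swap _)

theorem exists_eqvGen_zero_fst_of_intCast (S T : ℤ) :
    ∃ e, EqvGen (PairTwist r) ((S : ZMod r), (T : ZMod r)) (0, e) := by
  induction hn : S.natAbs using Nat.strong_induction_on generalizing S T with
  | _ n ih =>
  rcases eq_or_ne S 0 with rfl | hS
  · exact ⟨T, by simpa using EqvGen.refl _⟩
  have hlt : (T % S).natAbs < n := by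
    have := Int.emod_lt T hS
    have := Int.emod_nonneg T hS
    omega
  obtain ⟨e, he⟩ := ih _ hlt (T % S) (-S) rfl
  have hmod : EqvGen (PairTwist r) ((S : ZMod r), (T : ZMod r)) (S, ((T % S : ℤ) : ZMod r)) := by
    convert eqvGen_u_pow ((S : ZMod r), (T : ZMod r)) ((T / S : ℤ) : ZMod r) using 2
    rw [Int.emod_def]
    push_cast
    ring
  refine ⟨e, hmod.trans _ _ _ ((eqvGen_swap _).trans _ _ _ ?_)⟩
  simpa using he

theorem exists_eqvGen_zero_fst (p : ZMod r × ZMod r) : ∃ e, EqvGen (PairTwist r) p (0, e) := by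
  obtain ⟨S, hS⟩ := ZMod.intCast_surjective p.1
  obtain ⟨T, hT⟩ := ZMod.intCast_surjective p.2
  simpa [hS, hT] using exists_eqvGen_zero_fst_of_intCast (r := r) S T

end PairTwist

inductive BlockTwist (r : ℕ) :
    (ZMod r × ZMod r) × (ZMod r × ZMod r) → (ZMod r × ZMod r) × (ZMod r × ZMod r) → Prop
  | fst {p q : ZMod r × ZMod r} (h : PairTwist r p q) (x : ZMod r × ZMod r) :
      BlockTwist r (p, x) (q, x)
  | w (x : (ZMod r × ZMod r) × (ZMod r × ZMod r)) :
      BlockTwist r x ((x.1.1, x.1.2 - x.1.1 + x.2.1 - 1), (x.2.1, x.2.2 + x.1.1 - x.2.1 + 1))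

namespace BlockTwist

variable {r : ℕ}

theorem eqvGen_fst {p q : ZMod r × ZMod r} (h : EqvGen (PairTwist r) p q) (x : ZMod r × ZMod r) :
    EqvGen (BlockTwist r) (p, x) (q, x) :=
  h.map (·, x) fun _ _ hpq => fst hpq x

theorem eqvGen_transfer (a b c : ZMod r) :
    EqvGen (BlockTwist r) ((0, a), (0, b)) ((0, a - c), (0, b + c)) := by
  obtain ⟨n, rfl⟩ := ZMod.intCast_surjective c
  let F (m : ℤ) : (ZMod r × ZMod r) × (ZMod r × ZMod r) := ((0, a - m), (0, b + m))
  have step (m : ℤ) : BlockTwist r (F m) (F (m + 1)) := by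
    convert w (F m) using 3 <;> simp only [F] <;> push_cast <;> ring
  simpa [F] using EqvGen.of_forall_int_succ F step 0 n

theorem eqvGen_vertical_zero (h2 : IsUnit (2 : ZMod r)) (a b : ZMod r) :
    EqvGen (BlockTwist r) ((0, a), (0, b)) ((0, 0), (0, 0)) := by
  obtain ⟨x, hx⟩ := Even.of_isUnit_two h2 (a - b)
  have h₁ := eqvGen_transfer a b x
  have h₂ := eqvGen_fst (PairTwist.eqvGen_neg (0, a - x)) (0, b + x)
  simp only [Prod.neg_mk, neg_zero] at h₂
  have h₃ := eqvGen_transfer (-(a - x)) (b + x) (x - a)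
  convert h₁.trans _ _ _ (h₂.trans _ _ _ h₃) using 3
  · ring
  · linear_combination hx

theorem eqvGen_vertical (h2 : IsUnit (2 : ZMod r)) (a b a' b' : ZMod r) :
    EqvGen (BlockTwist r) ((0, a), (0, b)) ((0, a'), (0, b')) :=
  (eqvGen_vertical_zero h2 a b).trans _ _ _ (eqvGen_vertical_zero h2 a' b').symm

end BlockTwist

section Transitivity

variable {r g : ℕ}

theorem dehnStep_eqvGen_update_of_pairTwist (δ : RootTuple r g) (i : Fin g)
    {p q : ZMod r × ZMod r} (h : EqvGen (PairTwist r) p q) :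
    EqvGen (dehnStep r g) (update δ i p) (update δ i q) := by
  refine h.map (update δ i) ?_
  rintro p _ (_ | _)
  · exact Or.inl ⟨i, by simp⟩
  · exact Or.inr (Or.inl ⟨i, by simp⟩)

theorem dehnStep_eqvGen_update_update_of_blockTwist (δ : RootTuple r g) {i j : Fin g}
    (hij : (i : ℕ) + 1 = j) {x y : (ZMod r × ZMod r) × (ZMod r × ZMod r)}
    (h : EqvGen (BlockTwist r) x y) :
    EqvGen (dehnStep r g) (update (update δ i x.1) j x.2) (update (update δ i y.1) j y.2) := by
  have hi : (i : ℕ) + 1 < g := hij ▸ j.isLt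
  obtain rfl : j = ⟨i + 1, hi⟩ := Fin.ext hij.symm
  have hne : i ≠ ⟨i + 1, hi⟩ := by simp [Fin.ext_iff]
  refine h.map (fun x => update (update δ i x.1) ⟨i + 1, hi⟩ x.2) ?_
  rintro _ _ (⟨hpq, x⟩ | x)
  · rcases hpq with p | p
    · exact Or.inl ⟨i, by simp [update_comm hne]⟩
    · exact Or.inr (Or.inl ⟨i, by simp [update_comm hne]⟩)
  · exact Or.inr (Or.inr ⟨i, hi, by simp [hne, update_comm hne]⟩)

theorem exists_dehnStep_eqvGen_forall_fst_eq_zero (δ : RootTuple r g) :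
    ∃ δ', EqvGen (dehnStep r g) δ δ' ∧ ∀ i, (δ' i).1 = 0 := by
  obtain ⟨δ', -, hδ', h⟩ := EqvGen.exists_forall_of_update (R := dehnStep r g) (fun _ => True)
    (fun x : ZMod r × ZMod r => x.1 = 0) (fun f _ i => by
      obtain ⟨e, he⟩ := PairTwist.exists_eqvGen_zero_fst (f i)
      exact ⟨(0, e), rfl, trivial, by simpa using dehnStep_eqvGen_update_of_pairTwist f i he⟩)
    trivial
  exact ⟨δ', h, hδ'⟩

theorem dehnStep_eqvGen_update_zero (h2 : IsUnit (2 : ZMod r)) (hg : 2 ≤ g) {δ : RootTuple r g}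
    (hδ : ∀ i, (δ i).1 = 0) (i : Fin g) : EqvGen (dehnStep r g) δ (update δ i 0) := by
  have hvert (l : Fin g) : ((0 : ZMod r), (δ l).2) = δ l := Prod.ext (hδ l).symm rfl
  obtain ⟨j, k, hjk, hij | hik⟩ := Fin.exists_adjacent_of_two_le hg i
  · have hne : j ≠ k := fun h => by omega
    simpa [hij, hvert, update_comm hne, Prod.mk_zero_zero] using
      dehnStep_eqvGen_update_update_of_blockTwist δ hjk
        (BlockTwist.eqvGen_vertical h2 (δ j).2 (δ k).2 0 (δ k).2)
  · simpa [hik, hvert, Prod.mk_zero_zero] using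
      dehnStep_eqvGen_update_update_of_blockTwist δ hjk
        (BlockTwist.eqvGen_vertical h2 (δ j).2 (δ k).2 (δ j).2 0)

theorem dehnStep_eqvGen_zero_of_forall_fst_eq_zero (h2 : IsUnit (2 : ZMod r)) (hg : 2 ≤ g)
    {δ : RootTuple r g} (hδ : ∀ i, (δ i).1 = 0) : EqvGen (dehnStep r g) δ 0 := by
  obtain ⟨δ', -, hδ', h⟩ := EqvGen.exists_forall_of_update (R := dehnStep r g) _ (· = 0)
    (fun f hf i => ⟨0, rfl, fun j => by rcases eq_or_ne j i with rfl | hji <;> simp [*],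
      dehnStep_eqvGen_update_zero h2 hg hf i⟩) hδ
  rwa [show δ' = 0 from funext hδ'] at h

theorem dehnStep_eqvGen_zero (h2 : IsUnit (2 : ZMod r)) (hg : 2 ≤ g) (δ : RootTuple r g) :
    EqvGen (dehnStep r g) δ 0 := by
  obtain ⟨δ', h, hδ'⟩ := exists_dehnStep_eqvGen_forall_fst_eq_zero δ
  exact h.trans _ _ _ (dehnStep_eqvGen_zero_of_forall_fst_eq_zero h2 hg hδ')

end Transitivity

theorem dehn_transitive_odd_general (r g : ℕ) (hodd : Odd r) (hg : 2 ≤ g)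
    (δ δ' : RootTuple r g) :
    Relation.EqvGen (dehnStep r g) δ δ' := by
  have h2 : IsUnit (2 : ZMod r) := by
    exact_mod_cast (ZMod.isUnit_iff_coprime 2 r).2 (Nat.coprime_two_left.2 hodd)
  exact (dehnStep_eqvGen_zero h2 hg δ).trans _ _ _ (dehnStep_eqvGen_zero h2 hg δ').symm

/-- For `g ≥ 2` and `r` odd, the group generated by the Dehn twist
transformations and their inverses acts transitively on `(ℤ/r)^{2g}`. -/
theorem dehn_transitive_odd (r g : ℕ) (hr : 1 ≤ r) (hodd : Odd r) (hg : 2 ≤ g)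
    (δ δ' : RootTuple r g) :
    Relation.EqvGen (dehnStep r g) δ δ' :=
  dehn_transitive_odd_general r g hodd hg δ δ'
end

section
/- Fix r ≥ 1 even and g ≥ 2, with the Dehn-twist transformations Uᵢ, Vᵢ, Wᵢ on (ℤ/r)^{2g} as defined (Uᵢ: tᵢ ↦ tᵢ−sᵢ; Vᵢ: sᵢ ↦ sᵢ+tᵢ; Wᵢ: tᵢ ↦ tᵢ−sᵢ+s_{i+1}−1, t_{i+1} ↦ t_{i+1}+sᵢ−s_{i+1}+1). Then every element of (ℤ/r)^{2g} lies in the orbit of either (0,…,0,0) or (0,…,0,1) under the group generated by these transformations and their inverses. -/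
namespace DehnAux

section upd2
variable {α : Type*} {β : Type*} [DecidableEq α]

def upd2 (δ : α → β) (i j : α) (p q : β) : α → β :=
  Function.update (Function.update δ i p) j q

lemma upd2_def (δ : α → β) (i j : α) (p q : β) :
    Function.update (Function.update δ i p) j q = upd2 δ i j p q := rfl

lemma upd2_left {δ : α → β} {i j : α} (hij : i ≠ j) (p q : β) : upd2 δ i j p q i = p := by
  rw [upd2, Function.update_of_ne hij, Function.update_self]

lemma upd2_right {δ : α → β} {i j : α} (p q : β) : upd2 δ i j p q j = q :=
  Function.update_self _ _ _

lemma upd2_other {δ : α → β} {i j x : α} (hxi : x ≠ i) (hxj : x ≠ j) (p q : β) :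
    upd2 δ i j p q x = δ x := by
  rw [upd2, Function.update_of_ne hxj, Function.update_of_ne hxi]

lemma update_upd2_left {δ : α → β} {i j : α} (hij : i ≠ j) (p q p' : β) :
    Function.update (upd2 δ i j p q) i p' = upd2 δ i j p' q := by
  rw [upd2, Function.update_comm (Ne.symm hij), Function.update_idem, upd2]

lemma update_upd2_right {δ : α → β} {i j : α} (p q q' : β) :
    Function.update (upd2 δ i j p q) j q' = upd2 δ i j p q' := by
  rw [upd2, Function.update_idem, upd2]

lemma upd2_upd2 {δ : α → β} {i j : α} (hij : i ≠ j) (p q p' q' : β) :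
    upd2 (upd2 δ i j p q) i j p' q' = upd2 δ i j p' q' := by
  rw [upd2, update_upd2_left hij, update_upd2_right]

lemma upd2_self {δ : α → β} {i j : α} :
    upd2 δ i j (δ i) (δ j) = δ := by
  rw [upd2, show δ j = Function.update δ i (δ i) j by rw [Function.update_eq_self],
    Function.update_eq_self, Function.update_eq_self]

end upd2

variable {r g : ℕ}

abbrev Reach (δ δ' : RootTuple r g) : Prop := Relation.EqvGen (dehnStep r g) δ δ'

lemma Reach.trans' {a b c : RootTuple r g} (h1 : Reach a b) (h2 : Reach b c) : Reach a c :=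
  Relation.EqvGen.trans _ _ _ h1 h2

lemma Reach.symm' {a b : RootTuple r g} (h1 : Reach a b) : Reach b a :=
  Relation.EqvGen.symm _ _ h1

lemma step_U (δ : RootTuple r g) (i : Fin g) :
    Reach δ (Function.update δ i ((δ i).1, (δ i).2 - (δ i).1)) :=
  Relation.EqvGen.rel _ _ (Or.inl ⟨i, rfl⟩)

lemma step_V (δ : RootTuple r g) (i : Fin g) :
    Reach δ (Function.update δ i ((δ i).1 + (δ i).2, (δ i).2)) :=
  Relation.EqvGen.rel _ _ (Or.inr (Or.inl ⟨i, rfl⟩))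

lemma step_W (δ : RootTuple r g) (i : Fin g) (hi : (i : ℕ) + 1 < g) :
    Reach δ (Function.update
      (Function.update δ i
        ((δ i).1, (δ i).2 - (δ i).1 + (δ ⟨i + 1, hi⟩).1 - 1))
      ⟨i + 1, hi⟩
      ((δ ⟨i + 1, hi⟩).1, (δ ⟨i + 1, hi⟩).2 + (δ i).1 - (δ ⟨i + 1, hi⟩).1 + 1)) :=
  Relation.EqvGen.rel _ _ (Or.inr (Or.inr ⟨i, hi, rfl⟩))

lemma reach_U_nat (δ : RootTuple r g) (i : Fin g) (n : ℕ) :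
    Reach δ (Function.update δ i ((δ i).1, (δ i).2 - (n : ZMod r) * (δ i).1)) := by
  induction n with
  | zero => simpa using Relation.EqvGen.refl (r := dehnStep r g) δ
  | succ n ih =>
      refine ih.trans' ?_
      have h := step_U (Function.update δ i ((δ i).1, (δ i).2 - (n : ZMod r) * (δ i).1)) i
      simp only [Function.update_self, Function.update_idem] at h
      have e : ((δ i).2 - (n : ZMod r) * (δ i).1 - (δ i).1)
          = (δ i).2 - ((n + 1 : ℕ) : ZMod r) * (δ i).1 := by push_cast; ring
      rwa [e] at h

lemma reach_V_nat (δ : RootTuple r g) (i : Fin g) (n : ℕ) :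
    Reach δ (Function.update δ i ((δ i).1 + (n : ZMod r) * (δ i).2, (δ i).2)) := by
  induction n with
  | zero => simpa using Relation.EqvGen.refl (r := dehnStep r g) δ
  | succ n ih =>
      refine ih.trans' ?_
      have h := step_V (Function.update δ i ((δ i).1 + (n : ZMod r) * (δ i).2, (δ i).2)) i
      simp only [Function.update_self, Function.update_idem] at h
      have e : ((δ i).1 + (n : ZMod r) * (δ i).2 + (δ i).2)
          = (δ i).1 + ((n + 1 : ℕ) : ZMod r) * (δ i).2 := by push_cast; ring
      rwa [e] at h

lemma reach_U_sub (δ : RootTuple r g) (i : Fin g) (s t : ZMod r) (h : δ i = (s, t)) (n : ℕ) :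
    Reach δ (Function.update δ i (s, t - (n : ZMod r) * s)) := by
  simpa [h] using reach_U_nat δ i n

lemma reach_V_add_nat (δ : RootTuple r g) (i : Fin g) (s t : ZMod r) (h : δ i = (s, t)) (n : ℕ) :
    Reach δ (Function.update δ i (s + (n : ZMod r) * t, t)) := by
  simpa [h] using reach_V_nat δ i n

lemma reach_U_add (δ : RootTuple r g) (i : Fin g) (s t : ZMod r) (h : δ i = (s, t)) (n : ℕ) :
    Reach δ (Function.update δ i (s, t + (n : ZMod r) * s)) := by
  have h2 := reach_U_sub (Function.update δ i (s, t + (n : ZMod r) * s)) i s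
      (t + (n : ZMod r) * s) (Function.update_self _ _ _) n
  rw [Function.update_idem] at h2
  have e : t + (n : ZMod r) * s - (n : ZMod r) * s = t := by ring
  rw [e, show Function.update δ i (s, t) = δ by rw [← h]; exact Function.update_eq_self i δ] at h2
  exact h2.symm'

lemma reach_V_sub (δ : RootTuple r g) (i : Fin g) (s t : ZMod r) (h : δ i = (s, t)) (n : ℕ) :
    Reach δ (Function.update δ i (s - (n : ZMod r) * t, t)) := by
  have h2 := reach_V_add_nat (Function.update δ i (s - (n : ZMod r) * t, t)) i
      (s - (n : ZMod r) * t) t (Function.update_self _ _ _) n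
  rw [Function.update_idem] at h2
  have e : s - (n : ZMod r) * t + (n : ZMod r) * t = s := by ring
  rw [e, show Function.update δ i (s, t) = δ by rw [← h]; exact Function.update_eq_self i δ] at h2
  exact h2.symm'

/-- `U` with an arbitrary coefficient. -/
lemma reach_U' (δ : RootTuple r g) (i : Fin g) (s t : ZMod r) (h : δ i = (s, t)) (m : ZMod r) :
    Reach δ (Function.update δ i (s, t + m * s)) := by
  obtain ⟨n, rfl⟩ := ZMod.intCast_surjective m
  rcases n with k | k
  · simpa using reach_U_add δ i s t h k
  · have := reach_U_sub δ i s t h (k + 1)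
    have e : t - ((k+1 : ℕ) : ZMod r) * s = t + ((Int.negSucc k : ℤ) : ZMod r) * s := by
      push_cast [Int.negSucc_eq]; ring
    rwa [e] at this

/-- `V` with an arbitrary coefficient. -/
lemma reach_V' (δ : RootTuple r g) (i : Fin g) (s t : ZMod r) (h : δ i = (s, t)) (m : ZMod r) :
    Reach δ (Function.update δ i (s + m * t, t)) := by
  obtain ⟨n, rfl⟩ := ZMod.intCast_surjective m
  rcases n with k | k
  · simpa using reach_V_add_nat δ i s t h k
  · have := reach_V_sub δ i s t h (k + 1)
    have e : s - ((k+1 : ℕ) : ZMod r) * t = s + ((Int.negSucc k : ℤ) : ZMod r) * t := by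
      push_cast [Int.negSucc_eq]; ring
    rwa [e] at this

lemma reach_W_add (δ : RootTuple r g) (i j : Fin g) (hi : (i : ℕ) + 1 < g)
    (hj : j = ⟨i + 1, hi⟩) (s t s' t' : ZMod r)
    (h1 : δ i = (s, t)) (h2 : δ j = (s', t')) (n : ℕ) :
    Reach δ (upd2 δ i j (s, t + (n : ZMod r) * (s' - s - 1))
      (s', t' - (n : ZMod r) * (s' - s - 1))) := by
  subst hj
  have hij : i ≠ ⟨i + 1, hi⟩ := by
    intro h; have := congrArg Fin.val h; simp at this
  induction n with
  | zero =>
      simp only [Nat.cast_zero, zero_mul, add_zero, sub_zero, ← h1, ← h2, upd2_self]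
      exact Relation.EqvGen.refl δ
  | succ n ih =>
      refine ih.trans' ?_
      have h := step_W (upd2 δ i ⟨i + 1, hi⟩ (s, t + (n : ZMod r) * (s' - s - 1))
        (s', t' - (n : ZMod r) * (s' - s - 1))) i hi
      rw [upd2_left hij, upd2_right, upd2_def, upd2_upd2 hij] at h
      have e1 : t + (n : ZMod r) * (s' - s - 1) - s + s' - 1
          = t + ((n + 1 : ℕ) : ZMod r) * (s' - s - 1) := by push_cast; ring
      have e2 : t' - (n : ZMod r) * (s' - s - 1) + s - s' + 1
          = t' - ((n + 1 : ℕ) : ZMod r) * (s' - s - 1) := by push_cast; ring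
      rwa [e1, e2] at h

lemma reach_W_sub (δ : RootTuple r g) (i j : Fin g) (hi : (i : ℕ) + 1 < g)
    (hj : j = ⟨i + 1, hi⟩) (s t s' t' : ZMod r)
    (h1 : δ i = (s, t)) (h2 : δ j = (s', t')) (n : ℕ) :
    Reach δ (upd2 δ i j (s, t - (n : ZMod r) * (s' - s - 1))
      (s', t' + (n : ZMod r) * (s' - s - 1))) := by
  have hij : i ≠ j := by
    subst hj; intro h; have := congrArg Fin.val h; simp at this
  have h3 := reach_W_add (upd2 δ i j (s, t - (n : ZMod r) * (s' - s - 1))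
      (s', t' + (n : ZMod r) * (s' - s - 1))) i j hi hj s (t - (n : ZMod r) * (s' - s - 1))
      s' (t' + (n : ZMod r) * (s' - s - 1)) (upd2_left hij _ _) (upd2_right _ _) n
  rw [upd2_upd2 hij] at h3
  have e1 : t - (n : ZMod r) * (s' - s - 1) + (n : ZMod r) * (s' - s - 1) = t := by ring
  have e2 : t' + (n : ZMod r) * (s' - s - 1) - (n : ZMod r) * (s' - s - 1) = t' := by ring
  rw [e1, e2, ← h1, ← h2, upd2_self] at h3
  exact h3.symm'

/-- `W` with an arbitrary coefficient `m` : shifts `tᵢ` by `m*(s'-s-1)` and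
`t_{i+1}` by the opposite. -/
lemma reach_W' (δ : RootTuple r g) (i j : Fin g) (hi : (i : ℕ) + 1 < g)
    (hj : j = ⟨i + 1, hi⟩) (s t s' t' : ZMod r)
    (h1 : δ i = (s, t)) (h2 : δ j = (s', t')) (m : ZMod r) :
    Reach δ (upd2 δ i j (s, t + m * (s' - s - 1)) (s', t' - m * (s' - s - 1))) := by
  obtain ⟨n, rfl⟩ := ZMod.intCast_surjective m
  rcases n with k | k
  · simpa using reach_W_add δ i j hi hj s t s' t' h1 h2 k
  · have h3 := reach_W_sub δ i j hi hj s t s' t' h1 h2 (k + 1)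
    have e1 : t - ((k + 1 : ℕ) : ZMod r) * (s' - s - 1)
        = t + ((Int.negSucc k : ℤ) : ZMod r) * (s' - s - 1) := by
      push_cast [Int.negSucc_eq]; ring
    have e2 : t' + ((k + 1 : ℕ) : ZMod r) * (s' - s - 1)
        = t' - ((Int.negSucc k : ℤ) : ZMod r) * (s' - s - 1) := by
      push_cast [Int.negSucc_eq]; ring
    rwa [e1, e2] at h3


/-- swap: `(s,t) ↦ (t,-s)` on pair `i`. -/
lemma reach_swap (δ : RootTuple r g) (i : Fin g) (s t : ZMod r) (h : δ i = (s, t)) :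
    Reach δ (Function.update δ i (t, -s)) := by
  have h1 := reach_V' δ i s t h 1
  rw [one_mul] at h1
  have h2 := reach_U' (Function.update δ i (s + t, t)) i (s + t) t
      (Function.update_self _ _ _) (-1)
  rw [Function.update_idem, show t + (-1) * (s + t) = -s by ring] at h2
  have h3 := reach_V' (Function.update δ i (s + t, -s)) i (s + t) (-s)
      (Function.update_self _ _ _) 1
  rw [Function.update_idem, show s + t + 1 * (-s) = t by ring] at h3
  exact (h1.trans' h2).trans' h3

/-- Euclid: any pair can be brought to the form `(0, x)`. -/
lemma reach_kill_s : ∀ (n : ℕ) (b a : ℤ), b.natAbs ≤ n → ∀ (δ : RootTuple r g) (i : Fin g),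
    ∃ x, Reach (Function.update δ i ((a : ZMod r), (b : ZMod r)))
      (Function.update δ i (0, x)) := by
  intro n
  induction n with
  | zero =>
      intro b a hb δ i
      have hb0 : b = 0 := by omega
      subst hb0
      refine ⟨-(a : ZMod r), ?_⟩
      have h := reach_swap (Function.update δ i ((a : ZMod r), ((0 : ℤ) : ZMod r))) i
        ((a : ZMod r)) ((0 : ℤ) : ZMod r) (Function.update_self _ _ _)
      rw [Function.update_idem] at h; simpa using h
  | succ n ih =>
      intro b a hb δ i
      by_cases hb0 : b = 0
      · subst hb0
        refine ⟨-(a : ZMod r), ?_⟩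
        have h := reach_swap (Function.update δ i ((a : ZMod r), ((0 : ℤ) : ZMod r))) i
          ((a : ZMod r)) ((0 : ℤ) : ZMod r) (Function.update_self _ _ _)
        rw [Function.update_idem] at h; simpa using h
      · -- reduce `a` modulo `b`, then swap
        have h1 := reach_V' (Function.update δ i ((a : ZMod r), (b : ZMod r))) i
          ((a : ZMod r)) ((b : ZMod r)) (Function.update_self _ _ _) (((-(a / b) : ℤ) : ZMod r))
        rw [Function.update_idem,
          show (a : ZMod r) + ((-(a / b) : ℤ) : ZMod r) * (b : ZMod r)
            = ((a % b : ℤ) : ZMod r) by rw [Int.emod_def]; push_cast; ring] at h1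
        have h2 := reach_swap (Function.update δ i (((a % b : ℤ) : ZMod r), (b : ZMod r))) i
          (((a % b : ℤ) : ZMod r)) ((b : ZMod r)) (Function.update_self _ _ _)
        rw [Function.update_idem,
          show -(((a % b : ℤ)) : ZMod r) = ((-(a % b) : ℤ) : ZMod r) by push_cast; ring] at h2
        have hlt : (-(a % b)).natAbs ≤ n := by
          have h0 : 0 ≤ a % b := Int.emod_nonneg a hb0
          rcases lt_or_gt_of_ne hb0 with hneg | hpos
          · have hl : a % b < -b := by
              rw [← Int.emod_neg]; exact Int.emod_lt_of_pos a (by omega)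
            omega
          · have hl : a % b < b := Int.emod_lt_of_pos a hpos
            omega
        obtain ⟨x, hx⟩ := ih (-(a % b)) b hlt δ i
        exact ⟨x, (h1.trans' h2).trans' hx⟩

/-- Phase 1: make all first components zero. -/
lemma phase1 (δ : RootTuple r g) : ∀ k : ℕ, ∃ δ', Reach δ δ' ∧
    ∀ i : Fin g, (i : ℕ) < k → (δ' i).1 = 0 := by
  intro k
  induction k with
  | zero => exact ⟨δ, Relation.EqvGen.refl δ, fun i h => absurd h (by omega)⟩
  | succ k ih =>
      obtain ⟨δ', h1, h2⟩ := ih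
      by_cases hk : k < g
      · set i : Fin g := ⟨k, hk⟩ with hidef
        obtain ⟨a, ha⟩ := ZMod.intCast_surjective (δ' i).1
        obtain ⟨b, hb⟩ := ZMod.intCast_surjective (δ' i).2
        obtain ⟨x, hx⟩ := reach_kill_s b.natAbs b a le_rfl δ' i
        have heq : Function.update δ' i ((a : ZMod r), (b : ZMod r)) = δ' := by
          rw [show ((a : ZMod r), (b : ZMod r)) = δ' i by rw [ha, hb]]
          exact Function.update_eq_self i δ'
        rw [heq] at hx
        refine ⟨Function.update δ' i (0, x), h1.trans' hx, ?_⟩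
        intro i' hi'
        by_cases hii : i' = i
        · subst hii; simp
        · rw [Function.update_of_ne hii]
          refine h2 i' ?_
          have hne : (i' : ℕ) ≠ k := fun hc => hii (Fin.ext hc)
          omega
      · exact ⟨δ', h1, fun i _ => h2 i (by omega)⟩

/-- Phase 2: given all first components zero, concentrate all second
components in position `k` and beyond. -/
lemma phase2 (δ : RootTuple r g) (hs : ∀ i, (δ i).1 = 0) :
    ∀ k : ℕ, k < g → ∃ δ', Reach δ δ' ∧ (∀ i : Fin g, (i : ℕ) < k → δ' i = (0, 0)) ∧
      ∀ i, (δ' i).1 = 0 := by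
  intro k
  induction k with
  | zero => exact fun _ => ⟨δ, Relation.EqvGen.refl δ, fun i h => absurd h (by omega), hs⟩
  | succ k ih =>
      intro hk
      obtain ⟨δ', h1, h2, h3⟩ := ih (by omega)
      set i : Fin g := ⟨k, by omega⟩ with hidef
      set j : Fin g := ⟨k + 1, hk⟩ with hjdef
      have hi : (i : ℕ) + 1 < g := hk
      have hj : j = ⟨(i : ℕ) + 1, hi⟩ := rfl
      have hij : i ≠ j := by
        intro h; have := congrArg Fin.val h; simp [hidef, hjdef] at this
      have hpi : δ' i = (0, (δ' i).2) := by rw [← h3 i]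
      have hpj : δ' j = (0, (δ' j).2) := by rw [← h3 j]
      have hw := reach_W' δ' i j hi hj 0 (δ' i).2 0 (δ' j).2 hpi hpj (δ' i).2
      rw [show (δ' i).2 + (δ' i).2 * (0 - 0 - 1) = 0 by ring,
        show (δ' j).2 - (δ' i).2 * (0 - 0 - 1) = (δ' j).2 + (δ' i).2 by ring] at hw
      refine ⟨upd2 δ' i j (0, 0) (0, (δ' j).2 + (δ' i).2), h1.trans' hw, ?_, ?_⟩
      · intro i' hi'
        by_cases hii : i' = i
        · subst hii; rw [upd2_left hij]
        · by_cases hij' : i' = j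
          · subst hij'; simp [hjdef] at hi'
          · rw [upd2_other hii hij']
            refine h2 i' ?_
            have hne : (i' : ℕ) ≠ k := fun hc => hii (Fin.ext hc)
            omega
      · intro i'
        by_cases hii : i' = i
        · subst hii; rw [upd2_left hij]
        · by_cases hij' : i' = j
          · subst hij'; rw [upd2_right]
          · rw [upd2_other hii hij']; exact h3 i'

/-- Phase 3: with pair `i` equal to `(0,0)` and pair `i+1` equal to `(0,T)`,
the value `T` can be shifted by any even amount. -/
lemma reach_FL (δ : RootTuple r g) (i j : Fin g) (hi : (i : ℕ) + 1 < g)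
    (hj : j = ⟨i + 1, hi⟩) (T m : ZMod r) (h1 : δ i = (0, 0)) (h2 : δ j = (0, T)) :
    Reach δ (upd2 δ i j (0, 0) (0, T + 2 * m)) := by
  have hij : i ≠ j := by
    subst hj; intro h; have := congrArg Fin.val h; simp at this
  have s1 := reach_W' δ i j hi hj 0 0 0 T h1 h2 (-1)
  rw [show (0 : ZMod r) + (-1) * (0 - 0 - 1) = 1 by ring,
    show T - (-1) * (0 - 0 - 1) = T - 1 by ring] at s1
  have s2 := reach_V' (upd2 δ i j (0, 1) (0, T - 1)) i 0 1 (upd2_left hij _ _) 1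
  rw [update_upd2_left hij, show (0 : ZMod r) + 1 * 1 = 1 by ring] at s2
  have s3 := reach_W' (upd2 δ i j (1, 1) (0, T - 1)) i j hi hj 1 1 0 (T - 1)
    (upd2_left hij _ _) (upd2_right _ _) (m + 1)
  rw [upd2_upd2 hij, show (1 : ZMod r) + (m + 1) * (0 - 1 - 1) = 1 - 2 * (m + 1) by ring,
    show T - 1 - (m + 1) * (0 - 1 - 1) = T - 1 + 2 * (m + 1) by ring] at s3
  have s4 := reach_U' (upd2 δ i j (1, 1 - 2 * (m + 1)) (0, T - 1 + 2 * (m + 1))) i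
    1 (1 - 2 * (m + 1)) (upd2_left hij _ _) (2 * (m + 1) - 2)
  rw [update_upd2_left hij,
    show (1 : ZMod r) - 2 * (m + 1) + (2 * (m + 1) - 2) * 1 = -1 by ring] at s4
  have s5 := reach_V' (upd2 δ i j (1, -1) (0, T - 1 + 2 * (m + 1))) i 1 (-1)
    (upd2_left hij _ _) 1
  rw [update_upd2_left hij, show (1 : ZMod r) + 1 * (-1) = 0 by ring] at s5
  have s6 := reach_W' (upd2 δ i j (0, -1) (0, T - 1 + 2 * (m + 1))) i j hi hj
    0 (-1) 0 (T - 1 + 2 * (m + 1)) (upd2_left hij _ _) (upd2_right _ _) (-1)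
  rw [upd2_upd2 hij, show (-1 : ZMod r) + (-1) * (0 - 0 - 1) = 0 by ring,
    show T - 1 + 2 * (m + 1) - (-1) * (0 - 0 - 1) = T + 2 * m by ring] at s6
  exact ((((s1.trans' s2).trans' s3).trans' s4).trans' s5).trans' s6

end DehnAux


/-- For `g ≥ 2` and `r` even, every tuple is in the orbit of `(0,…,0,0)` or
`(0,…,0,1)` under the Dehn twist transformations and their inverses. -/
theorem dehn_two_orbits_even (r g : ℕ) (hr : 1 ≤ r) (heven : Even r) (hg : 2 ≤ g)
    (δ : RootTuple r g) :
    Relation.EqvGen (dehnStep r g) δ (fun _ => (0, 0)) ∨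
    Relation.EqvGen (dehnStep r g) δ
      (Function.update (fun _ => ((0 : ZMod r), (0 : ZMod r)))
        ⟨g - 1, by omega⟩ (0, 1)) := by
  haveI : NeZero r := ⟨by omega⟩
  have hg1 : g - 1 < g := by omega
  have hg2 : g - 2 < g := by omega
  obtain ⟨δ₁, hδ1, hs1⟩ := DehnAux.phase1 δ g
  have hs1' : ∀ i, (δ₁ i).1 = 0 := fun i => hs1 i i.isLt
  obtain ⟨δ₂, hδ2, hz2, hs2⟩ := DehnAux.phase2 δ₁ hs1' (g - 1) hg1
  have hi : ((⟨g - 2, hg2⟩ : Fin g) : ℕ) + 1 < g := by show g - 2 + 1 < g; omega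
  have hj : (⟨g - 1, hg1⟩ : Fin g) = ⟨((⟨g - 2, hg2⟩ : Fin g) : ℕ) + 1, hi⟩ :=
    Fin.ext (by show g - 1 = g - 2 + 1; omega)
  have hij : (⟨g - 2, hg2⟩ : Fin g) ≠ ⟨g - 1, hg1⟩ := by
    intro h; have h' := congrArg Fin.val h; simp only [] at h'; omega
  have h1 : δ₂ ⟨g - 2, hg2⟩ = (0, 0) := hz2 _ (by show g - 2 < g - 1; omega)
  have h2 : δ₂ ⟨g - 1, hg1⟩ = (0, (δ₂ ⟨g - 1, hg1⟩).2) := by rw [← hs2 ⟨g - 1, hg1⟩]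
  have hcast : (((δ₂ ⟨g - 1, hg1⟩).2.val : ℕ) : ZMod r) = (δ₂ ⟨g - 1, hg1⟩).2 :=
    ZMod.natCast_rightInverse _
  rcases Nat.even_or_odd (δ₂ ⟨g - 1, hg1⟩).2.val with ⟨z, hz⟩ | ⟨z, hz⟩
  · -- even : reach the all-zero tuple
    left
    have hm : (δ₂ ⟨g - 1, hg1⟩).2 + 2 * (-(z : ZMod r)) = 0 := by
      rw [← hcast, hz]; push_cast; ring
    have hFL := DehnAux.reach_FL δ₂ ⟨g - 2, hg2⟩ ⟨g - 1, hg1⟩ hi hj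
      (δ₂ ⟨g - 1, hg1⟩).2 (-(z : ZMod r)) h1 h2
    rw [hm] at hFL
    have hfin : DehnAux.upd2 δ₂ ⟨g - 2, hg2⟩ ⟨g - 1, hg1⟩ ((0 : ZMod r), (0 : ZMod r)) (0, 0)
        = fun _ => ((0 : ZMod r), (0 : ZMod r)) := by
      funext x
      by_cases hx : x = (⟨g - 2, hg2⟩ : Fin g)
      · subst hx; rw [DehnAux.upd2_left hij]
      · by_cases hx' : x = (⟨g - 1, hg1⟩ : Fin g)
        · subst hx'; rw [DehnAux.upd2_right]
        · rw [DehnAux.upd2_other hx hx']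
          refine hz2 x ?_
          have h9 : (x : ℕ) ≠ g - 1 := fun hc => hx' (Fin.ext hc)
          have h10 := x.isLt
          omega
    rw [hfin] at hFL
    exact hδ1.trans' (hδ2.trans' hFL)
  · -- odd : reach the tuple ending in (0,1)
    right
    have hm : (δ₂ ⟨g - 1, hg1⟩).2 + 2 * (-(z : ZMod r)) = 1 := by
      rw [← hcast, hz]; push_cast; ring
    have hFL := DehnAux.reach_FL δ₂ ⟨g - 2, hg2⟩ ⟨g - 1, hg1⟩ hi hj
      (δ₂ ⟨g - 1, hg1⟩).2 (-(z : ZMod r)) h1 h2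
    rw [hm] at hFL
    have hfin : DehnAux.upd2 δ₂ ⟨g - 2, hg2⟩ ⟨g - 1, hg1⟩ ((0 : ZMod r), (0 : ZMod r)) (0, 1)
        = Function.update (fun _ => ((0 : ZMod r), (0 : ZMod r))) ⟨g - 1, hg1⟩ (0, 1) := by
      funext x
      by_cases hx' : x = (⟨g - 1, hg1⟩ : Fin g)
      · subst hx'; rw [DehnAux.upd2_right, Function.update_self]
      · rw [Function.update_of_ne hx']
        by_cases hx : x = (⟨g - 2, hg2⟩ : Fin g)
        · subst hx; rw [DehnAux.upd2_left hij]
        · rw [DehnAux.upd2_other hx hx']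
          refine hz2 x ?_
          have h9 : (x : ℕ) ≠ g - 1 := fun hc => hx' (Fin.ext hc)
          have h10 := x.isLt
          omega
    rw [hfin] at hFL
    exact hδ1.trans' (hδ2.trans' hFL)
end

section
/- Fix r ≥ 2 even and g ≥ 1. Define A : (ℤ/r)^{2g} → ℤ/2 by A(s₁,t₁,…,s_g,t_g) = ∑ᵢ (sᵢ+1)(tᵢ+1) mod 2 (using any integer representatives; this is well defined since r is even). Then A is invariant under each of the transformations Uᵢ : tᵢ ↦ tᵢ−sᵢ, Vᵢ : sᵢ ↦ sᵢ+tᵢ, and Wᵢ : (tᵢ, t_{i+1}) ↦ (tᵢ−sᵢ+s_{i+1}−1, t_{i+1}+sᵢ−s_{i+1}+1). -/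
def atiyahInv (r g : ℕ) (h2 : 2 ∣ r) (δ : RootTuple r g) : ZMod 2 :=
  ∑ i : Fin g,
    (ZMod.castHom h2 (ZMod 2) (δ i).1 + 1) * (ZMod.castHom h2 (ZMod 2) (δ i).2 + 1)

lemma sum_comp_update {ι α M : Type*} [Fintype ι] [DecidableEq ι] [AddCommMonoid M]
    (s : Finset ι) (F : α → M) (δ : ι → α) (i : ι) (b : α) (hi : i ∈ s) :
    ∑ j ∈ s, F (Function.update δ i b j) = F b + ∑ j ∈ s \ {i}, F (δ j) := by
  simp only [Function.apply_update (fun _ p => F p) δ i b]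
  exact Finset.sum_update_of_mem hi _ _

/-- `A` is invariant under each basic Dehn twist transformation. -/
theorem atiyah_invariant (r g : ℕ) (hr : 2 ≤ r) (h2 : 2 ∣ r) (hg : 1 ≤ g)
    (δ δ' : RootTuple r g) (h : dehnStep r g δ δ') :
    atiyahInv r g h2 δ' = atiyahInv r g h2 δ := by
  set φ := ZMod.castHom h2 (ZMod 2) with hφ
  set F : ZMod r × ZMod r → ZMod 2 := fun p => (φ p.1 + 1) * (φ p.2 + 1) with hF
  have key2 : ∀ s t : ZMod 2, (s + 1) * (t - s + 1) = (s + 1) * (t + 1) := by decide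
  have key2' : ∀ s t : ZMod 2, (s + t + 1) * (t + 1) = (s + 1) * (t + 1) := by decide
  have key4 : ∀ s t u v : ZMod 2,
      (s + 1) * (t - s + u - 1 + 1) + (u + 1) * (v + s - u + 1 + 1)
        = (u + 1) * (v + 1) + (s + 1) * (t + 1) := by decide
  have base : ∀ δ₀ : RootTuple r g, atiyahInv r g h2 δ₀ = ∑ j, F (δ₀ j) := fun _ => rfl
  obtain ⟨i, rfl⟩ | ⟨i, rfl⟩ | ⟨i, hi, rfl⟩ := h
  · rw [base, base, sum_comp_update _ F δ i _ (Finset.mem_univ i),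
      Finset.sum_eq_sum_sdiff_singleton_add (Finset.mem_univ i) (fun j => F (δ j)), add_comm]
    congr 1
    simp only [hF, map_sub]
    exact key2 _ _
  · rw [base, base, sum_comp_update _ F δ i _ (Finset.mem_univ i),
      Finset.sum_eq_sum_sdiff_singleton_add (Finset.mem_univ i) (fun j => F (δ j)), add_comm]
    congr 1
    simp only [hF, map_add]
    exact key2' _ _
  · set k : Fin g := ⟨i + 1, hi⟩ with hk
    have hik : i ≠ k := by
      intro h
      have := congrArg Fin.val h
      simp [hk] at this
    rw [base, base, sum_comp_update _ F _ k _ (Finset.mem_univ k),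
      sum_comp_update _ F δ i _ (Finset.mem_sdiff.mpr ⟨Finset.mem_univ i, by
        simp [hik]⟩),
      Finset.sum_eq_sum_sdiff_singleton_add (Finset.mem_univ k) (fun j => F (δ j)),
      Finset.sum_eq_sum_sdiff_singleton_add
        (Finset.mem_sdiff.mpr ⟨Finset.mem_univ i, by simp [hik]⟩) (fun j => F (δ j))]
    have hki : δ ⟨(i : ℕ) + 1, hi⟩ = δ k := rfl
    have hmain : F ((δ k).1, (δ k).2 + (δ i).1 - (δ k).1 + 1)
        + F ((δ i).1, (δ i).2 - (δ i).1 + (δ k).1 - 1) = F (δ k) + F (δ i) := by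
      simp only [hF, map_sub, map_add, map_one]
      rw [add_comm]
      exact key4 _ _ _ _
    rw [← add_assoc, hmain]
    ring
end

section
/- Fix r ≥ 2 even and g ≥ 2, and let A : (ℤ/r)^{2g} → ℤ/2 be A(s₁,t₁,…,s_g,t_g) = ∑ᵢ(sᵢ+1)(tᵢ+1) mod 2. Then the number of tuples δ ∈ (ℤ/r)^{2g} with A(δ) = 0 is r^{2g}(2^g+1)/2^{g+1}, and the number with A(δ) = 1 is r^{2g}(2^g−1)/2^{g+1}. -/
open Finset

lemma AddChar.map_sum_eq_prod {ι A R : Type*} [AddCommMonoid A] [CommMonoid R]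
    (ψ : AddChar A R) (s : Finset ι) (f : ι → A) :
    ψ (∑ i ∈ s, f i) = ∏ i ∈ s, ψ (f i) := by
  classical
  induction s using Finset.induction_on with
  | empty => simp
  | insert i s hi ih => rw [sum_insert hi, prod_insert hi, AddChar.map_add_eq_mul, ih]

lemma AddChar.sum_pi_map_sum {ι α A R : Type*} [Fintype ι] [DecidableEq ι] [Fintype α]
    [AddCommMonoid A] [CommSemiring R] (ψ : AddChar A R) (f : α → A) :
    ∑ δ : ι → α, ψ (∑ i, f (δ i)) = (∑ x, ψ (f x)) ^ Fintype.card ι := by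
  simp_rw [AddChar.map_sum_eq_prod]
  rw [← Fintype.prod_sum fun (_ : ι) x => ψ (f x), prod_const, card_univ]

section ParityCount

variable {β : Type*} [Fintype β]

def signChar : AddChar (ZMod 2) ℤ := AddChar.zmodChar 2 (by norm_num : (-1 : ℤ) ^ 2 = 1)

lemma card_filter_eq_zero_add_card_filter_eq_one (F : β → ZMod 2) :
    #{x | F x = 0} + #{x | F x = 1} = Fintype.card β := by
  rw [← card_univ, ← card_filter_add_card_filter_not (s := univ) (fun x => F x = 0)]
  congr 2
  exact filter_congr fun x _ => ⟨fun h => by simp [h], Fin.eq_one_of_ne_zero _⟩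

lemma sum_signChar_eq (F : β → ZMod 2) :
    ∑ x, signChar (F x) = (#{x | F x = 0} : ℤ) - #{x | F x = 1} := by
  have hsign : ∀ e : ZMod 2, signChar e = if e = 0 then 1 else -1 := by decide
  simp_rw [hsign, sum_ite, sum_const, nsmul_eq_mul, mul_one, mul_neg_one, ← sub_eq_add_neg]
  congr 3
  exact filter_congr fun x _ => ⟨Fin.eq_one_of_ne_zero _, fun h => by simp [h]⟩

end ParityCount

section PairParity

variable {G : Type*} [AddGroup G] [Fintype G]

def pairParity (φ : G →+ ZMod 2) (p : G × G) : ZMod 2 := (φ p.1 + 1) * (φ p.2 + 1)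

lemma two_mul_card_filter_eq_zero {φ : G →+ ZMod 2} (hφ : Function.Surjective φ) :
    2 * #{x | φ x = 0} = Fintype.card G := by
  have hfib := AddMonoidHom.card_fiber_eq_of_mem_range φ (hφ 0) (hφ 1)
  rw [two_mul, ← card_filter_eq_zero_add_card_filter_eq_one φ, hfib]

lemma card_filter_pairParity_eq_one (φ : G →+ ZMod 2) :
    #{p | pairParity φ p = 1} = #{x | φ x = 0} ^ 2 := by
  have hodd : ∀ a b : ZMod 2, (a + 1) * (b + 1) = 1 ↔ a = 0 ∧ b = 0 := by decide
  rw [sq, ← card_product, ← filter_product]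
  simp only [pairParity, hodd]
  rfl

lemma two_mul_sum_signChar_pairParity {φ : G →+ ZMod 2} (hφ : Function.Surjective φ) :
    2 * ∑ p, signChar (pairParity φ p) = (Fintype.card G : ℤ) ^ 2 := by
  have htotal := card_filter_eq_zero_add_card_filter_eq_one (pairParity φ)
  have hodd := card_filter_pairParity_eq_one φ
  have hker := two_mul_card_filter_eq_zero hφ
  rw [Fintype.card_prod, ← hker, hodd] at htotal
  have htotal' : ((#{p | pairParity φ p = 0} : ℕ) : ℤ) + #{x | φ x = 0} ^ 2
      = 2 * #{x | φ x = 0} * (2 * #{x | φ x = 0}) := by exact_mod_cast htotal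
  rw [sum_signChar_eq, hodd, ← hker]
  push_cast
  linear_combination 2 * htotal'

theorem count_even_odd_type_general (r g : ℕ) (hr : 2 ≤ r) (h2 : 2 ∣ r) :
    Nat.card {δ : RootTuple r g // atiyahInv r g h2 δ = 0} =
      r ^ (2 * g) * (2 ^ g + 1) / 2 ^ (g + 1) ∧
    Nat.card {δ : RootTuple r g // atiyahInv r g h2 δ = 1} =
      r ^ (2 * g) * (2 ^ g - 1) / 2 ^ (g + 1) := by
  have : NeZero r := ⟨by omega⟩
  set φ := (ZMod.castHom h2 (ZMod 2)).toAddMonoidHom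
  set A : RootTuple r g → ZMod 2 := fun δ => ∑ i, pairParity φ (δ i)
  have hcard (e : ZMod 2) : Nat.card {δ // atiyahInv r g h2 δ = e} = #{δ | A δ = e} := by
    rw [Nat.card_eq_fintype_card, Fintype.card_subtype]
    rfl
  have hsum := card_filter_eq_zero_add_card_filter_eq_one A
  have hdiff := sum_signChar_eq A
  have hpair := two_mul_sum_signChar_pairParity (φ := φ) (ZMod.ringHom_surjective _)
  rw [AddChar.sum_pi_map_sum] at hdiff
  simp only [Fintype.card_fun, Fintype.card_prod, ZMod.card, Fintype.card_fin] at hsum hdiff hpair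
  have hsum' : (#{δ | A δ = 0} : ℤ) + #{δ | A δ = 1} = r ^ (2 * g) := by
    rw [pow_mul, sq]; exact_mod_cast hsum
  have hdiff' : 2 ^ g * ((#{δ | A δ = 0} : ℤ) - #{δ | A δ = 1}) = r ^ (2 * g) := by
    rw [← hdiff, ← mul_pow, hpair, pow_mul]
  rw [hcard, hcard]
  constructor <;> refine (Nat.div_eq_of_eq_mul_left (by positivity) ?_).symm <;>
    zify [Nat.one_le_two_pow]
  · linear_combination (-2 ^ g) * hsum' - hdiff'
  · linear_combination (-2 ^ g) * hsum' + hdiff'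

/-- The number of `r`-th roots of even (resp. odd) type equals
`r^{2g}(2^g ± 1)/2^{g+1}`. -/
theorem count_even_odd_type (r g : ℕ) (hr : 2 ≤ r) (h2 : 2 ∣ r) (hg : 2 ≤ g) :
    Nat.card {δ : RootTuple r g // atiyahInv r g h2 δ = 0} =
      r ^ (2 * g) * (2 ^ g + 1) / 2 ^ (g + 1) ∧
    Nat.card {δ : RootTuple r g // atiyahInv r g h2 δ = 1} =
      r ^ (2 * g) * (2 ^ g - 1) / 2 ^ (g + 1) :=
  count_even_odd_type_general r g hr h2
end PairParity
end

section
/- Let r ≥ 1 and let d, d' be positive divisors of r with d' ≤ d. Consider the standard action of SL(2,ℤ) on (ℤ/r)². If (0, d mod r) and (0, d' mod r) lie in the same SL(2,ℤ)-orbit, then d = d'. -/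
/-- The standard action of `SL(2,ℤ)` on `(ℤ/r)²`, by reducing the matrix
mod `r` and multiplying. -/
def slAction (r : ℕ) (A : Matrix.SpecialLinearGroup (Fin 2) ℤ)
    (v : Fin 2 → ZMod r) : Fin 2 → ZMod r :=
  ((A : Matrix (Fin 2) (Fin 2) ℤ).map (Int.cast : ℤ → ZMod r)).mulVec v

/-- If `(0,d)` and `(0,d')` (with `d, d'` positive divisors of `r`,
`d' ≤ d`) lie in the same `SL(2,ℤ)`-orbit, then `d = d'`. -/
theorem sl2_orbit_divisor_unique (r d d' : ℕ) (hr : 1 ≤ r)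
    (hd : d ∣ r) (hd' : d' ∣ r) (hdpos : 0 < d) (hd'pos : 0 < d') (hle : d' ≤ d)
    (h : ∃ A : Matrix.SpecialLinearGroup (Fin 2) ℤ,
      slAction r A ![0, (d : ZMod r)] = ![0, (d' : ZMod r)]) :
    d = d' := by
  obtain ⟨A, hA⟩ := h
  have h1 := congrFun hA 1
  simp [slAction, Matrix.mulVec, dotProduct, Fin.sum_univ_two] at h1
  -- h1 : (A 1 1 : ZMod r) * d = d'
  have key : ((A.1 1 1 * d - d' : ℤ) : ZMod r) = 0 := by
    push_cast
    rw [h1]; ring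
  rw [ZMod.intCast_zmod_eq_zero_iff_dvd] at key
  have hdr : (d : ℤ) ∣ r := Int.natCast_dvd_natCast.mpr hd
  have hdd' : (d : ℤ) ∣ d' := by
    have h2 : (d : ℤ) ∣ A.1 1 1 * d := ⟨A.1 1 1, mul_comm _ _⟩
    have := dvd_sub h2 (dvd_trans hdr key)
    simpa using this
  have : d ∣ d' := Int.natCast_dvd_natCast.mp hdd'
  exact le_antisymm (Nat.le_of_dvd hd'pos this) hle
end

section
/- Let r ≥ 1. Every element (s,t) ∈ (ℤ/r)² lies in the SL(2,ℤ)-orbit (under the standard action on (ℤ/r)²) of a unique element of the form (0, d mod r), where d is a positive divisor of r and the ideal of ℤ/r generated by d equals the ideal generated by s and t. -/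
/-- Key arithmetic lemma: if `gcd(gcd(s,t),m) = 1` then the pair `(s,t)` can be
lifted modulo `m` to a coprime pair of integers. -/
lemma exists_coprime_lift (s t m : ℕ) (h : Nat.gcd (Nat.gcd s t) m = 1) :
    ∃ b c : ℤ, IsCoprime b c ∧ (m : ℤ) ∣ b - s ∧ (m : ℤ) ∣ c - t := by
  rcases Nat.eq_zero_or_pos s with hs | hs
  · subst hs
    refine ⟨m, t, ?_, by simp, by simp⟩
    rw [Int.isCoprime_iff_gcd_eq_one, Int.gcd_natCast_natCast, Nat.gcd_comm]
    simpa using h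
  · set g := Nat.gcd s (t ^ s) with hgdef
    have hg : g ∣ s := Nat.gcd_dvd_left _ _
    set k := s / g with hkdef
    have hs' : k * g = s := Nat.div_mul_cancel hg
    have hcop : Nat.Coprime s (t + m * k) := by
      rw [Nat.Coprime]
      by_contra hne
      obtain ⟨p, hp, hpd⟩ := Nat.exists_prime_and_dvd hne
      have hps : p ∣ s := hpd.trans (Nat.gcd_dvd_left _ _)
      have hptk : p ∣ t + m * k := hpd.trans (Nat.gcd_dvd_right _ _)
      by_cases hpt : p ∣ t
      · have hpm : ¬ p ∣ m := by
          intro hpm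
          have : p ∣ 1 := h ▸ Nat.dvd_gcd (Nat.dvd_gcd hps hpt) hpm
          exact hp.one_lt.ne' (Nat.dvd_one.mp this)
        have hpk : ¬ p ∣ k := by
          intro hpk
          set a := s.factorization p with hadef
          have h1 : p ^ a ∣ s := Nat.ordProj_dvd s p
          have ha : a ≤ s := le_of_lt (Nat.factorization_lt p hs.ne')
          have h2 : p ^ a ∣ t ^ s :=
            (pow_dvd_pow p ha).trans (pow_dvd_pow_of_dvd hpt s)
          have h3 : p ^ a ∣ g := Nat.dvd_gcd h1 h2
          have h4 : p ^ (a + 1) ∣ s := by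
            rw [← hs', pow_succ]
            exact mul_dvd_mul h3 hpk |>.trans (dvd_of_eq (Nat.mul_comm g k))
          exact Nat.pow_succ_factorization_not_dvd hs.ne' hp h4
        have hmk : p ∣ m * k := (Nat.dvd_add_right hpt).mp hptk
        rcases hp.dvd_mul.mp hmk with h' | h'
        · exact hpm h'
        · exact hpk h'
      · have hpg : ¬ p ∣ g := fun hpg =>
          hpt (hp.dvd_of_dvd_pow (hpg.trans (Nat.gcd_dvd_right _ _)))
        have hpk : p ∣ k := by
          have := hps
          rw [← hs'] at this
          exact (hp.dvd_mul.mp this).resolve_right hpg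
        have h5 : p ∣ m * k := Dvd.dvd.mul_left hpk m
        exact hpt ((Nat.dvd_add_iff_left h5).mpr hptk)
    refine ⟨s, ((t + m * k : ℕ) : ℤ), ?_, by simp, ⟨k, by push_cast; ring⟩⟩
    rw [Int.isCoprime_iff_gcd_eq_one, Int.gcd_natCast_natCast]
    exact hcop

/-- From divisibility in `ZMod r` back to `ℕ`, for divisors of `r`. -/
lemma nat_dvd_of_zmod_dvd (r a b : ℕ) [NeZero r] (ha : a ∣ r)
    (h : (a : ZMod r) ∣ (b : ZMod r)) : a ∣ b := by
  obtain ⟨c, hc⟩ := h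
  have hc' : (b : ZMod r) = ((a * c.val : ℕ) : ZMod r) := by
    push_cast
    rw [hc, ZMod.natCast_rightInverse c]
  have hmod : b ≡ a * c.val [MOD r] := (ZMod.natCast_eq_natCast_iff _ _ _).mp hc'
  have hdvd : (r : ℤ) ∣ (a * c.val : ℕ) - (b : ℕ) := Nat.modEq_iff_dvd.mp hmod
  have haz : (a : ℤ) ∣ (b : ℤ) := by
    have h1 : (a : ℤ) ∣ ((a * c.val : ℕ) : ℤ) - (b : ℤ) :=
      (Int.natCast_dvd_natCast.mpr ha).trans hdvd
    have h2 : (a : ℤ) ∣ ((a * c.val : ℕ) : ℤ) := by push_cast; exact Dvd.intro _ rfl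
    have := dvd_sub h2 h1
    simpa using this
  exact_mod_cast haz

/-- Every element of `(ℤ/r)²` lies in the `SL(2,ℤ)`-orbit of a unique
`(0, d)` with `d` a positive divisor of `r` generating the same ideal. -/
theorem sl2_orbit_normal_form (r : ℕ) (hr : 1 ≤ r) (v : Fin 2 → ZMod r) :
    ∃! d : ℕ, (0 < d ∧ d ∣ r ∧
      Ideal.span {((d : ZMod r))} = Ideal.span {v 0, v 1} ∧
      ∃ A : Matrix.SpecialLinearGroup (Fin 2) ℤ,
        slAction r A ![0, (d : ZMod r)] = v) := by
  haveI : NeZero r := ⟨by omega⟩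
  set s := (v 0).val with hsdef
  set t := (v 1).val with htdef
  have hv0 : v 0 = (s : ZMod r) := (ZMod.natCast_rightInverse (v 0)).symm
  have hv1 : v 1 = (t : ZMod r) := (ZMod.natCast_rightInverse (v 1)).symm
  set d := Nat.gcd (Nat.gcd s t) r with hddef
  have hdr : d ∣ r := Nat.gcd_dvd_right _ _
  have hdpos : 0 < d := Nat.gcd_pos_of_pos_right _ (by omega)
  have hds : d ∣ s := (Nat.gcd_dvd_left _ _).trans (Nat.gcd_dvd_left s t)
  have hdt : d ∣ t := (Nat.gcd_dvd_left _ _).trans (Nat.gcd_dvd_right s t)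
  -- the ideal equality
  have hId : Ideal.span {((d : ZMod r))} = Ideal.span {v 0, v 1} := by
    apply le_antisymm
    · rw [Ideal.span_singleton_le_iff_mem, Ideal.mem_span_pair]
      -- Bezout twice
      have e1 : ((Nat.gcd s t : ℕ) : ZMod r)
          = ((s : ℤ).gcdA t) * (s : ZMod r) + ((s : ℤ).gcdB t) * (t : ZMod r) := by
        have := Int.gcd_eq_gcd_ab (s : ℤ) (t : ℤ)
        rw [Int.gcd_natCast_natCast] at this
        calc ((Nat.gcd s t : ℕ) : ZMod r) = (((Nat.gcd s t : ℕ) : ℤ) : ZMod r) := by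
              push_cast; ring
          _ = ((((s : ℤ)) * (s : ℤ).gcdA t + (t : ℤ) * (s : ℤ).gcdB t : ℤ) : ZMod r) := by
              rw [← this]
          _ = _ := by push_cast; ring
      have e2 : ((d : ℕ) : ZMod r)
          = (((Nat.gcd s t : ℕ) : ℤ)).gcdA r * ((Nat.gcd s t : ℕ) : ZMod r) := by
        have h2 := Int.gcd_eq_gcd_ab ((Nat.gcd s t : ℕ) : ℤ) (r : ℤ)
        rw [Int.gcd_natCast_natCast] at h2
        calc ((d : ℕ) : ZMod r) = (((d : ℕ) : ℤ) : ZMod r) := by push_cast; ring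
          _ = ((((Nat.gcd s t : ℕ) : ℤ) * (((Nat.gcd s t : ℕ) : ℤ)).gcdA r
                + (r : ℤ) * (((Nat.gcd s t : ℕ) : ℤ)).gcdB r : ℤ) : ZMod r) := by
              rw [← h2]
          _ = _ := by push_cast [ZMod.natCast_self]; ring
      refine ⟨((((Nat.gcd s t : ℕ) : ℤ)).gcdA r : ZMod r) * ((s : ℤ).gcdA t : ZMod r),
        ((((Nat.gcd s t : ℕ) : ℤ)).gcdA r : ZMod r) * ((s : ℤ).gcdB t : ZMod r), ?_⟩
      rw [hv0, hv1, e2, e1]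
      ring
    · rw [Ideal.span_le]
      rintro x hx
      simp only [Set.mem_insert_iff, Set.mem_singleton_iff] at hx
      rcases hx with rfl | rfl
      · exact Ideal.mem_span_singleton.mpr (by rw [hv0]; exact_mod_cast Nat.cast_dvd_cast hds)
      · exact Ideal.mem_span_singleton.mpr (by rw [hv1]; exact_mod_cast Nat.cast_dvd_cast hdt)
  -- the matrix
  have hEx : ∃ A : Matrix.SpecialLinearGroup (Fin 2) ℤ,
      slAction r A ![0, (d : ZMod r)] = v := by
    set m := r / d with hmdef
    have hmd : m * d = r := Nat.div_mul_cancel hdr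
    have hgcd1 : Nat.gcd (Nat.gcd (s / d) (t / d)) m = 1 := by
      have hin : Nat.gcd s t = d * Nat.gcd (s / d) (t / d) := by
        conv_lhs => rw [← Nat.div_mul_cancel hds, ← Nat.div_mul_cancel hdt]
        rw [Nat.gcd_mul_right]
        ring
      have hout : d = d * Nat.gcd (Nat.gcd (s / d) (t / d)) m := by
        conv_lhs => rw [hddef]
        rw [hin]
        conv_lhs => rw [show r = d * m by rw [← hmd, Nat.mul_comm]]
        rw [Nat.gcd_mul_left]
      exact Nat.eq_of_mul_eq_mul_left hdpos (by rw [Nat.mul_one]; exact hout.symm)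
    obtain ⟨b, c, hbc, ⟨e1, he1⟩, ⟨e2, he2⟩⟩ := exists_coprime_lift (s / d) (t / d) m hgcd1
    obtain ⟨u, w, huw⟩ := hbc
    refine ⟨⟨!![w, b; -u, c], by
      rw [Matrix.det_fin_two_of]; linarith [huw]⟩, ?_⟩
    have hbd : (b : ZMod r) * (d : ZMod r) = v 0 := by
      have key : ((b * d - s : ℤ) : ZMod r) = 0 := by
        rw [ZMod.intCast_zmod_eq_zero_iff_dvd]
        refine ⟨e1, ?_⟩
        have hsd : ((s / d : ℕ) : ℤ) * (d : ℤ) = (s : ℤ) := by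
          exact_mod_cast congrArg (Nat.cast : ℕ → ℤ) (Nat.div_mul_cancel hds)
        have hr' : ((m : ℕ) : ℤ) * (d : ℤ) = (r : ℤ) := by exact_mod_cast congrArg (Nat.cast : ℕ → ℤ) hmd
        calc (b * d - s : ℤ) = (b - (s / d : ℕ)) * d + ((s / d : ℕ) * d - s) := by ring
          _ = (m * e1) * d + 0 := by rw [he1, hsd]; ring
          _ = r * e1 := by rw [← hr']; ring
      rw [hv0]
      push_cast at key
      linear_combination key
    have hcd : (c : ZMod r) * (d : ZMod r) = v 1 := by
      have key : ((c * d - t : ℤ) : ZMod r) = 0 := by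
        rw [ZMod.intCast_zmod_eq_zero_iff_dvd]
        refine ⟨e2, ?_⟩
        have htd : ((t / d : ℕ) : ℤ) * (d : ℤ) = (t : ℤ) := by
          exact_mod_cast congrArg (Nat.cast : ℕ → ℤ) (Nat.div_mul_cancel hdt)
        have hr' : ((m : ℕ) : ℤ) * (d : ℤ) = (r : ℤ) := by exact_mod_cast congrArg (Nat.cast : ℕ → ℤ) hmd
        calc (c * d - t : ℤ) = (c - (t / d : ℕ)) * d + ((t / d : ℕ) * d - t) := by ring
          _ = (m * e2) * d + 0 := by rw [he2, htd]; ring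
          _ = r * e2 := by rw [← hr']; ring
      rw [hv1]
      push_cast at key
      linear_combination key
    funext i
    fin_cases i
    · simpa [slAction, Matrix.mulVec, dotProduct, Fin.sum_univ_two] using hbd
    · simpa [slAction, Matrix.mulVec, dotProduct, Fin.sum_univ_two] using hcd
  refine ⟨d, ⟨hdpos, hdr, hId, hEx⟩, ?_⟩
  rintro d' ⟨hd'pos, hd'r, hId', -⟩
  have hspan : Ideal.span {((d' : ZMod r))} = Ideal.span {((d : ZMod r))} := by
    rw [hId', hId]
  have h1 : (d' : ZMod r) ∣ (d : ZMod r) := by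
    rw [← Ideal.mem_span_singleton, hspan]
    exact Ideal.mem_span_singleton.mpr dvd_rfl
  have h2 : (d : ZMod r) ∣ (d' : ZMod r) := by
    rw [← Ideal.mem_span_singleton, ← hspan]
    exact Ideal.mem_span_singleton.mpr dvd_rfl
  exact Nat.dvd_antisymm (nat_dvd_of_zmod_dvd r d' d hd'r h1)
    (nat_dvd_of_zmod_dvd r d d' hdr h2)
end

section
/- Let r ≥ 1 and let d be a positive divisor of r. The SL(2,ℤ)-orbit of (0, d mod r) in (ℤ/r)² is exactly the set of pairs (s,t) ∈ (ℤ/r)² such that the ideal generated by s and t in ℤ/r equals the ideal generated by d. -/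
open Finset in
lemma coprime_shift (a b n : ℤ) (ha : a ≠ 0) (x y z : ℤ)
    (h : a * x + b * y + n * z = 1) :
    ∃ k : ℤ, IsCoprime a (b + k * n) := by
  classical
  set K : ℕ := ∏ p ∈ a.natAbs.primeFactors.filter (fun p : ℕ => ¬ ((p : ℤ) ∣ b)), p with hK
  refine ⟨(K : ℤ), ?_⟩
  rw [Int.isCoprime_iff_gcd_eq_one]
  by_contra hg
  obtain ⟨p, hp, hpd⟩ := Nat.exists_prime_and_dvd hg
  have hpa : (p : ℤ) ∣ a :=
    Int.dvd_natAbs.mp (Int.natCast_dvd_natCast.mpr (hpd.trans (Nat.gcd_dvd_left _ _)))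
  have hpc : (p : ℤ) ∣ b + (K : ℤ) * n :=
    Int.dvd_natAbs.mp (Int.natCast_dvd_natCast.mpr (hpd.trans (Nat.gcd_dvd_right _ _)))
  have hpp : Prime (p : ℤ) := Nat.prime_iff_prime_int.mp hp
  by_cases hpb : (p : ℤ) ∣ b
  · -- p ∤ n and p ∤ K, yet p ∣ K * n
    have hpn : ¬ (p : ℤ) ∣ n := by
      intro hn
      have : (p : ℤ) ∣ 1 := by
        rw [← h]
        exact dvd_add (dvd_add (hpa.mul_right _) (hpb.mul_right _)) (hn.mul_right _)
      exact hpp.not_unit (isUnit_of_dvd_one this)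
    have hpK : ¬ (p : ℕ) ∣ K := by
      intro hKd
      obtain ⟨q, hq, hpq⟩ := (Nat.Prime.prime hp).exists_mem_finset_dvd hKd
      rw [Finset.mem_filter] at hq
      have hq' : q.Prime := Nat.prime_of_mem_primeFactors hq.1
      have : p = q := (Nat.prime_dvd_prime_iff_eq hp hq').mp hpq
      exact hq.2 (this ▸ (Int.natCast_dvd_natCast.mpr (dvd_refl p)).trans (by exact_mod_cast hpb))
    have : (p : ℤ) ∣ (K : ℤ) * n := (dvd_add_right hpb).mp hpc
    rcases hpp.dvd_mul.mp this with h1 | h2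
    · exact hpK (Int.natCast_dvd_natCast.mp h1)
    · exact hpn h2
  · -- p ∈ the filter, so p ∣ K, hence p ∣ b
    have hmem : p ∈ a.natAbs.primeFactors.filter (fun p : ℕ => ¬ ((p : ℤ) ∣ b)) := by
      rw [Finset.mem_filter, Nat.mem_primeFactors]
      exact ⟨⟨hp, Int.natCast_dvd_natCast.mp (Int.dvd_natAbs.mpr hpa), by simpa using ha⟩, hpb⟩
    have hpK : (p : ℤ) ∣ (K : ℤ) := Int.natCast_dvd_natCast.mpr (Finset.dvd_prod_of_mem _ hmem)
    exact hpb ((dvd_add_right (hpK.mul_right n)).mp (by rwa [add_comm] at hpc))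

lemma slAction_apply (r : ℕ) (A : Matrix.SpecialLinearGroup (Fin 2) ℤ) (d : ZMod r) (i : Fin 2) :
    slAction r A ![0, d] i = ((A.1 i 1 : ℤ) : ZMod r) * d := by
  simp [slAction, Matrix.mulVec, dotProduct, Fin.sum_univ_two]


/-- The `SL(2,ℤ)`-orbit of `(0,d)` is exactly the set of pairs generating
the same ideal of `ℤ/r` as `d`. -/
theorem sl2_orbit_eq_ideal_set (r d : ℕ) (hr : 1 ≤ r) (hd : d ∣ r) (hdpos : 0 < d)
    (v : Fin 2 → ZMod r) :
    (∃ A : Matrix.SpecialLinearGroup (Fin 2) ℤ,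
        slAction r A ![0, (d : ZMod r)] = v) ↔
      Ideal.span {v 0, v 1} = Ideal.span {((d : ZMod r))} := by
  haveI : NeZero r := ⟨by omega⟩
  obtain ⟨m, hm⟩ := hd
  have hm1 : 1 ≤ m := by
    rcases Nat.eq_zero_or_pos m with h | h
    · subst h; omega
    · exact h
  constructor
  · rintro ⟨A, rfl⟩
    apply le_antisymm
    · rw [Ideal.span_le]
      rintro w hw
      rcases hw with rfl | hw
      · rw [SetLike.mem_coe, Ideal.mem_span_singleton, slAction_apply]
        exact ⟨_, mul_comm _ _⟩
      · rcases hw with rfl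
        rw [SetLike.mem_coe, Ideal.mem_span_singleton, slAction_apply]
        exact ⟨_, mul_comm _ _⟩
    · rw [Ideal.span_singleton_le_iff_mem, Ideal.mem_span_pair]
      refine ⟨-((A.1 1 0 : ℤ) : ZMod r), ((A.1 0 0 : ℤ) : ZMod r), ?_⟩
      rw [slAction_apply, slAction_apply]
      have hdet : A.1 0 0 * A.1 1 1 - A.1 0 1 * A.1 1 0 = 1 := by
        have h2 := A.2
        rwa [Matrix.det_fin_two] at h2
      have hcast : ((A.1 0 0 : ℤ) : ZMod r) * ((A.1 1 1 : ℤ) : ZMod r)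
          - ((A.1 0 1 : ℤ) : ZMod r) * ((A.1 1 0 : ℤ) : ZMod r) = 1 := by
        have := congrArg (fun z : ℤ => (z : ZMod r)) hdet
        push_cast at this
        exact this
      linear_combination (d : ZMod r) * hcast
  · intro hspan
    have h0 : (d : ZMod r) ∣ v 0 := by
      rw [← Ideal.mem_span_singleton, ← hspan]
      exact Ideal.subset_span (by simp)
    have h1 : (d : ZMod r) ∣ v 1 := by
      rw [← Ideal.mem_span_singleton, ← hspan]
      exact Ideal.subset_span (by simp)
    have hdm : (d : ZMod r) ∈ Ideal.span ({v 0, v 1} : Set (ZMod r)) := by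
      rw [hspan]; exact Ideal.mem_span_singleton_self _
    obtain ⟨x, y, hxy⟩ := Ideal.mem_span_pair.mp hdm
    obtain ⟨s, hs⟩ := h0
    obtain ⟨t, ht⟩ := h1
    set S : ℤ := (s.val : ℤ) with hS
    set T : ℤ := (t.val : ℤ) with hT
    set X : ℤ := (x.val : ℤ) with hX
    set Y : ℤ := (y.val : ℤ) with hY
    have hcastS : ((S : ℤ) : ZMod r) = s := by rw [hS]; simp [ZMod.natCast_val, ZMod.cast_id]
    have hcastT : ((T : ℤ) : ZMod r) = t := by rw [hT]; simp [ZMod.natCast_val, ZMod.cast_id]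
    have hcastX : ((X : ℤ) : ZMod r) = x := by rw [hX]; simp [ZMod.natCast_val, ZMod.cast_id]
    have hcastY : ((Y : ℤ) : ZMod r) = y := by rw [hY]; simp [ZMod.natCast_val, ZMod.cast_id]
    -- congruence : r ∣ X*(d*S) + Y*(d*T) - d over ℤ
    have hcong : ((X * (d * S) + Y * (d * T) - d : ℤ) : ZMod r) = 0 := by
      push_cast
      rw [hcastS, hcastT, hcastX, hcastY]
      rw [← hs, ← ht]
      rw [hxy]
      ring
    have hrdvd : (r : ℤ) ∣ X * (d * S) + Y * (d * T) - d :=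
      (ZMod.intCast_zmod_eq_zero_iff_dvd _ _).mp hcong
    have hrm : (r : ℤ) = (d : ℤ) * (m : ℤ) := by exact_mod_cast congrArg (Nat.cast : ℕ → ℤ) hm
    have hddvd : (d : ℤ) * (m : ℤ) ∣ (d : ℤ) * (X * S + Y * T - 1) := by
      rw [← hrm]
      convert hrdvd using 1
      ring
    have hmd : (m : ℤ) ∣ X * S + Y * T - 1 := by
      have hd0 : (d : ℤ) ≠ 0 := by exact_mod_cast hdpos.ne'
      exact (mul_dvd_mul_iff_left hd0).mp hddvd
    obtain ⟨z, hz⟩ := hmd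
    -- apply coprime_shift with a = S + m, b = T, n = m
    have hane : S + (m : ℤ) ≠ 0 := by
      have : (0 : ℤ) ≤ S := by rw [hS]; exact_mod_cast Nat.zero_le _
      omega
    have hone : (S + (m : ℤ)) * X + T * Y + (m : ℤ) * (-z - X) = 1 := by
      have : X * S + Y * T - 1 = (m : ℤ) * z := hz
      linarith [this]
    obtain ⟨k, hco⟩ := coprime_shift (S + m) T m hane X Y (-z - X) hone
    obtain ⟨g, hg0, hg1⟩ := hco.exists_SL2_col 1
    refine ⟨g, ?_⟩
    funext i
    fin_cases i
    · show slAction r g ![0, (d : ZMod r)] 0 = v 0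
      rw [slAction_apply]
      have : (g.1 0 1 : ℤ) = S + m := hg0
      rw [this]
      have hr0 : (((d : ℤ) * (m : ℤ) : ℤ) : ZMod r) = 0 := by
        rw [← hrm]; exact_mod_cast ZMod.natCast_self r
      calc ((S + (m : ℤ) : ℤ) : ZMod r) * (d : ZMod r)
          = ((d * S + d * m : ℤ) : ZMod r) := by push_cast; ring
        _ = ((d * S : ℤ) : ZMod r) + (((d : ℤ) * m : ℤ) : ZMod r) := by push_cast; ring
        _ = ((d * S : ℤ) : ZMod r) := by rw [hr0, add_zero]
        _ = (d : ZMod r) * s := by push_cast; rw [hcastS]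
        _ = v 0 := hs.symm
    · show slAction r g ![0, (d : ZMod r)] 1 = v 1
      rw [slAction_apply]
      have : (g.1 1 1 : ℤ) = T + k * m := hg1
      rw [this]
      have hr0 : ((k * ((d : ℤ) * (m : ℤ)) : ℤ) : ZMod r) = 0 := by
        rw [← hrm]
        push_cast
        rw [ZMod.natCast_self, mul_zero]
      calc ((T + k * (m : ℤ) : ℤ) : ZMod r) * (d : ZMod r)
          = ((d * T + k * ((d : ℤ) * m) : ℤ) : ZMod r) := by push_cast; ring
        _ = ((d * T : ℤ) : ZMod r) + ((k * ((d : ℤ) * m) : ℤ) : ZMod r) := by push_cast; ring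
        _ = ((d * T : ℤ) : ZMod r) := by rw [hr0, add_zero]
        _ = (d : ZMod r) * t := by push_cast; rw [hcastT]
        _ = v 1 := ht.symm
end

section
/- Let r ≥ 1. The number of orbits of the standard SL(2,ℤ)-action on (ℤ/r)² equals the number of positive divisors of r. -/
namespace Sl2Aux

/-- The orbit invariant: the gcd of (lifts of) the coordinates with `r`. -/
def dInv (r : ℕ) (v : Fin 2 → ZMod r) : ℕ :=
  Nat.gcd (Nat.gcd (v 0).val (v 1).val) r

lemma dInv_dvd (r : ℕ) (v : Fin 2 → ZMod r) : dInv r v ∣ r :=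
  Nat.gcd_dvd_right _ _

lemma dInv_dvd_val (r : ℕ) (v : Fin 2 → ZMod r) (i : Fin 2) :
    dInv r v ∣ (v i).val := by
  fin_cases i
  · exact dvd_trans (Nat.gcd_dvd_left _ _) (Nat.gcd_dvd_left _ _)
  · exact dvd_trans (Nat.gcd_dvd_left _ _) (Nat.gcd_dvd_right _ _)

lemma map_coe_mul (r : ℕ) (A B : Matrix.SpecialLinearGroup (Fin 2) ℤ) :
    (((A * B : Matrix.SpecialLinearGroup (Fin 2) ℤ) :
        Matrix (Fin 2) (Fin 2) ℤ).map (Int.cast : ℤ → ZMod r)) =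
    ((A : Matrix (Fin 2) (Fin 2) ℤ).map (Int.cast : ℤ → ZMod r)) *
    ((B : Matrix (Fin 2) (Fin 2) ℤ).map (Int.cast : ℤ → ZMod r)) := by
  rw [Matrix.SpecialLinearGroup.coe_mul]
  exact Matrix.map_mul (f := Int.castRingHom (ZMod r))

lemma slAction_mul (r : ℕ) (A B : Matrix.SpecialLinearGroup (Fin 2) ℤ)
    (v : Fin 2 → ZMod r) :
    slAction r (A * B) v = slAction r A (slAction r B v) := by
  unfold slAction
  rw [Matrix.mulVec_mulVec, map_coe_mul]

lemma slAction_one (r : ℕ) (v : Fin 2 → ZMod r) : slAction r 1 v = v := by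
  unfold slAction
  rw [Matrix.SpecialLinearGroup.coe_one,
    Matrix.map_one _ (Int.cast_zero) (Int.cast_one), Matrix.one_mulVec]

lemma slAction_expand (r : ℕ) (A : Matrix.SpecialLinearGroup (Fin 2) ℤ)
    (v : Fin 2 → ZMod r) (i : Fin 2) :
    slAction r A v i =
      ((A : Matrix (Fin 2) (Fin 2) ℤ) i 0 : ZMod r) * v 0 +
      ((A : Matrix (Fin 2) (Fin 2) ℤ) i 1 : ZMod r) * v 1 := by
  simp [slAction, Matrix.mulVec, dotProduct, Fin.sum_univ_two,
    Matrix.map_apply]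

lemma dvd_val_slAction (r : ℕ) [NeZero r] (e : ℕ) (he : e ∣ r)
    (A : Matrix.SpecialLinearGroup (Fin 2) ℤ) (v : Fin 2 → ZMod r)
    (h0 : e ∣ (v 0).val) (h1 : e ∣ (v 1).val) (i : Fin 2) :
    e ∣ (slAction r A v i).val := by
  have key : ∀ x : ZMod r, e ∣ x.val ↔ (ZMod.castHom he (ZMod e)) x = 0 := by
    intro x
    conv_rhs => rw [← ZMod.natCast_zmod_val x]
    rw [map_natCast, ZMod.natCast_eq_zero_iff]
  rw [key]
  rw [slAction_expand, map_add, map_mul, map_mul, (key _).mp h0, (key _).mp h1]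
  ring

lemma dInv_slAction (r : ℕ) [NeZero r] (A : Matrix.SpecialLinearGroup (Fin 2) ℤ)
    (v : Fin 2 → ZMod r) : dInv r (slAction r A v) = dInv r v := by
  have h : ∀ (B : Matrix.SpecialLinearGroup (Fin 2) ℤ) (w : Fin 2 → ZMod r),
      dInv r w ∣ dInv r (slAction r B w) := by
    intro B w
    refine Nat.dvd_gcd (Nat.dvd_gcd ?_ ?_) (dInv_dvd r w) <;>
      exact dvd_val_slAction r _ (dInv_dvd r w) B w (dInv_dvd_val r w 0)
        (dInv_dvd_val r w 1) _
  have h2 := h A⁻¹ (slAction r A v)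
  rw [← slAction_mul, inv_mul_cancel, slAction_one] at h2
  exact Nat.dvd_antisymm h2 (h A v)

/-- Every vector is in the orbit of `(dInv v, 0)`. -/
lemma orbit_rep (r : ℕ) [NeZero r] (v : Fin 2 → ZMod r) :
    Quot.mk (fun v w : Fin 2 → ZMod r =>
      ∃ A : Matrix.SpecialLinearGroup (Fin 2) ℤ, slAction r A v = w) v =
    Quot.mk _ ![((dInv r v : ℕ) : ZMod r), 0] := by
  set a := (v 0).val with ha
  set b := (v 1).val with hb
  have hv0 : v 0 = (a : ZMod r) := (ZMod.natCast_zmod_val (v 0)).symm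
  have hv1 : v 1 = (b : ZMod r) := (ZMod.natCast_zmod_val (v 1)).symm
  by_cases hg : Nat.gcd a b = 0
  · -- v = 0, dInv = r
    have ha0 : a = 0 := Nat.eq_zero_of_gcd_eq_zero_left hg
    have hb0 : b = 0 := Nat.eq_zero_of_gcd_eq_zero_right hg
    have hd : dInv r v = r := by
      unfold dInv; rw [← ha, ← hb, ha0, hb0]; simp
    have hveq : v = ![((dInv r v : ℕ) : ZMod r), 0] := by
      have c0 : v 0 = ((dInv r v : ℕ) : ZMod r) := by
        rw [hv0, ha0, hd]; simp [ZMod.natCast_self]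
      have c1 : v 1 = (0 : ZMod r) := by rw [hv1, hb0]; simp
      funext i
      fin_cases i
      · exact c0
      · exact c1
    exact congrArg _ hveq
  · -- main case
    set g := Nat.gcd a b with hgdef
    obtain ⟨a₁, ha1⟩ : g ∣ a := Nat.gcd_dvd_left a b
    obtain ⟨b₁, hb1⟩ : g ∣ b := Nat.gcd_dvd_right a b
    have hgZ : (g : ℤ) ≠ 0 := by exact_mod_cast hg
    -- Step 1: v ~ ![g, 0]
    have bez := Nat.gcd_eq_gcd_ab a b
    set x := Nat.gcdA a b
    set y := Nat.gcdB a b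
    have hdet1 : (Matrix.of ![![x, y], ![-(b₁ : ℤ), (a₁ : ℤ)]]).det = 1 := by
      rw [Matrix.det_fin_two_of]
      have h1 : (g : ℤ) * a₁ = a := by exact_mod_cast ha1.symm
      have h2 : (g : ℤ) * b₁ = b := by exact_mod_cast hb1.symm
      have key : (g : ℤ) * (x * a₁ - y * -b₁) = g * 1 := by
        calc (g : ℤ) * (x * a₁ - y * -b₁)
            = ((g : ℤ) * a₁) * x + ((g : ℤ) * b₁) * y := by ring
          _ = a * x + b * y := by rw [h1, h2]
          _ = g := bez.symm
          _ = g * 1 := by ring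
      exact mul_left_cancel₀ hgZ key
    set A₁ : Matrix.SpecialLinearGroup (Fin 2) ℤ :=
      ⟨Matrix.of ![![x, y], ![-(b₁ : ℤ), (a₁ : ℤ)]], hdet1⟩ with hA₁
    have step1 : slAction r A₁ v = ![((g : ℕ) : ZMod r), 0] := by
      have c0 : slAction r A₁ v 0 = ((g : ℕ) : ZMod r) := by
        rw [slAction_expand, hv0, hv1]
        show ((x : ZMod r) * a + (y : ZMod r) * b) = (g : ZMod r)
        have hq : ((a * x + b * y : ℤ) : ZMod r) = ((g : ℤ) : ZMod r) := by
          rw [← bez]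
        push_cast at hq ⊢
        rw [← hq]; ring
      have c1 : slAction r A₁ v 1 = (0 : ZMod r) := by
        rw [slAction_expand, hv0, hv1]
        show ((-(b₁ : ℤ) : ℤ) : ZMod r) * a + ((a₁ : ℤ) : ZMod r) * b = 0
        rw [ha1, hb1]
        push_cast
        ring
      funext i
      fin_cases i
      · exact c0
      · exact c1
    -- Step 2: ![d, 0] ~ ![g, 0] with d = gcd g r
    set d := Nat.gcd g r with hddef
    have hd0 : 0 < d := Nat.gcd_pos_of_pos_right g (Nat.pos_of_ne_zero (NeZero.ne r))
    have hg1 : d * (g / d) = g := Nat.mul_div_cancel' (Nat.gcd_dvd_left g r)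
    have hr1 : d * (r / d) = r := Nat.mul_div_cancel' (Nat.gcd_dvd_right g r)
    have hcop : Nat.gcd (g / d) (r / d) = 1 :=
      Nat.coprime_div_gcd_div_gcd (m := g) (n := r) hd0
    set g₁ := g / d with hg₁def
    set r₁ := r / d with hr₁def
    have bez2 := Nat.gcd_eq_gcd_ab g₁ r₁
    set x₂ := Nat.gcdA g₁ r₁
    set y₂ := Nat.gcdB g₁ r₁
    have hdet2 : (Matrix.of ![![(g₁ : ℤ), -y₂], ![(r₁ : ℤ), x₂]]).det = 1 := by
      rw [Matrix.det_fin_two_of]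
      rw [hcop] at bez2
      push_cast at bez2
      linarith [bez2]
    set A₂ : Matrix.SpecialLinearGroup (Fin 2) ℤ :=
      ⟨Matrix.of ![![(g₁ : ℤ), -y₂], ![(r₁ : ℤ), x₂]], hdet2⟩ with hA₂
    set u : Fin 2 → ZMod r := ![((d : ℕ) : ZMod r), 0] with hu
    have hu0 : u 0 = ((d : ℕ) : ZMod r) := rfl
    have hu1 : u 1 = (0 : ZMod r) := rfl
    have step2 : slAction r A₂ u = ![((g : ℕ) : ZMod r), 0] := by
      have c0 : slAction r A₂ u 0 = ((g : ℕ) : ZMod r) := by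
        rw [slAction_expand, hu0, hu1]
        show ((g₁ : ℤ) : ZMod r) * (d : ZMod r) + ((-y₂ : ℤ) : ZMod r) * 0
            = (g : ZMod r)
        have : (g : ℕ) = d * g₁ := hg1.symm
        rw [this]
        push_cast
        ring
      have c1 : slAction r A₂ u 1 = (0 : ZMod r) := by
        rw [slAction_expand, hu0, hu1]
        show ((r₁ : ℤ) : ZMod r) * (d : ZMod r) + ((x₂ : ℤ) : ZMod r) * 0
            = (0 : ZMod r)
        have hq : ((d * r₁ : ℕ) : ZMod r) = (0 : ZMod r) := by
          rw [hr1, ZMod.natCast_self]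
        push_cast at hq
        push_cast
        rw [mul_comm]
        rw [hq]
        ring
      funext i
      fin_cases i
      · exact c0
      · exact c1
    have hdInv : dInv r v = d := rfl
    rw [hdInv]
    have e1 : Quot.mk _ v = Quot.mk (fun v w : Fin 2 → ZMod r =>
        ∃ A : Matrix.SpecialLinearGroup (Fin 2) ℤ, slAction r A v = w)
        ![((g : ℕ) : ZMod r), 0] := Quot.sound ⟨A₁, step1⟩
    have e2 : Quot.mk (fun v w : Fin 2 → ZMod r =>
        ∃ A : Matrix.SpecialLinearGroup (Fin 2) ℤ, slAction r A v = w)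
        u = Quot.mk _ ![((g : ℕ) : ZMod r), 0] :=
      Quot.sound ⟨A₂, step2⟩
    rw [e1, ← e2]

end Sl2Aux

/-- The number of orbits of the `SL(2,ℤ)`-action on `(ℤ/r)²` equals the
number of positive divisors of `r`. -/
theorem sl2_orbit_count (r : ℕ) (hr : 1 ≤ r) :
    Nat.card (Quot (fun v w : Fin 2 → ZMod r =>
      ∃ A : Matrix.SpecialLinearGroup (Fin 2) ℤ, slAction r A v = w)) =
      r.divisors.card := by
  have : NeZero r := ⟨Nat.one_le_iff_ne_zero.mp hr⟩
  have hr0 : r ≠ 0 := Nat.one_le_iff_ne_zero.mp hr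
  set rel := fun v w : Fin 2 → ZMod r =>
    ∃ A : Matrix.SpecialLinearGroup (Fin 2) ℤ, slAction r A v = w with hrel
  have hmem : ∀ v : Fin 2 → ZMod r, Sl2Aux.dInv r v ∈ r.divisors := by
    intro v
    rw [Nat.mem_divisors]
    exact ⟨Sl2Aux.dInv_dvd r v, hr0⟩
  set F : Quot rel → {d // d ∈ r.divisors} :=
    Quot.lift (fun v => ⟨Sl2Aux.dInv r v, hmem v⟩)
      (by
        rintro v w ⟨A, rfl⟩
        simp [Sl2Aux.dInv_slAction]) with hF
  have hbij : Function.Bijective F := by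
    constructor
    · intro q₁ q₂
      induction q₁ using Quot.ind with | _ v =>
      induction q₂ using Quot.ind with | _ w =>
      intro h
      have hd : Sl2Aux.dInv r v = Sl2Aux.dInv r w := by
        simpa [hF] using congrArg Subtype.val h
      rw [Sl2Aux.orbit_rep r v, Sl2Aux.orbit_rep r w, hd]
    · rintro ⟨d, hd⟩
      rw [Nat.mem_divisors] at hd
      refine ⟨Quot.mk rel ![((d : ℕ) : ZMod r), 0], ?_⟩
      have hcomp : Sl2Aux.dInv r ![((d : ℕ) : ZMod r), 0] = d := by
        unfold Sl2Aux.dInv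
        simp only [Matrix.cons_val_zero, Matrix.cons_val_one, Matrix.head_cons,
          ZMod.val_natCast, ZMod.val_zero, Nat.gcd_zero_right]
        rw [← Nat.gcd_rec, Nat.gcd_comm, Nat.gcd_eq_left hd.1]
      simp [hF, hcomp]
  have hcard : Nat.card (Quot rel) = Nat.card {d // d ∈ r.divisors} :=
    Nat.card_eq_of_bijective F hbij
  rw [hcard, Nat.card_eq_fintype_card, Fintype.card_coe]
end

section
/- Let π be the group with generators u₁,v₁,…,u_g,v_g,q₁,…,qₙ,h and relations: h central, ∏ᵢ[uᵢ,vᵢ]∏ⱼqⱼ = h^{2g−2}, qⱼ^{αⱼ}h^{αⱼ−1} = 1. Let δ : π → ℤ/r be a homomorphism with δ(h) = 1, δ(uᵢ) ≡ sᵢ, δ(vᵢ) ≡ tᵢ, δ(qⱼ) ≡ kⱼ mod r, and suppose the integers b, βⱼ satisfy rb = 2g−2−∑ⱼkⱼ and rβⱼ = αⱼ−1+kⱼαⱼ. Then the elements ũᵢ := uᵢh^{−sᵢ}, ṽᵢ := vᵢh^{−tᵢ}, q̃ⱼ := qⱼh^{−kⱼ}, h̃ := h^r of the kernel of δ satisfy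 the relations: h̃ central, ∏ᵢ[ũᵢ,ṽᵢ]∏ⱼq̃ⱼ = h̃^b and q̃ⱼ^{αⱼ}h̃^{βⱼ} = 1. -/
open scoped commutatorElement

inductive STGen (g n : ℕ) : Type
  | u (i : Fin g) : STGen g n
  | v (i : Fin g) : STGen g n
  | q (j : Fin n) : STGen g n
  | h : STGen g n

open FreeGroup in
def STRels (g n : ℕ) (α : Fin n → ℕ) : Set (FreeGroup (STGen g n)) :=
  {w | (∃ x : STGen g n, w = ⁅of (STGen.h : STGen g n), of x⁆) ∨
    w = ((List.finRange g).map fun i =>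
          ⁅of (STGen.u i : STGen g n), of (STGen.v i : STGen g n)⁆).prod *
        ((List.finRange n).map fun j => of (STGen.q j : STGen g n)).prod *
        (of (STGen.h : STGen g n)) ^ (-(2 * (g : ℤ) - 2)) ∨
    ∃ j : Fin n, w = (of (STGen.q j : STGen g n)) ^ (α j) *
        (of (STGen.h : STGen g n)) ^ (α j - 1)}

abbrev STPi (g n : ℕ) (α : Fin n → ℕ) := PresentedGroup (STRels g n α)

/-
Write `h` for the central generator. The elements `uᵢ h^{-sᵢ}`, `vᵢ h^{-tᵢ}`, `qⱼ h^{-kⱼ}`, `h^r` lie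
in `ker δ` because `δ h` generates `ℤ/r`. Since `h` is central, the twists by powers of `h` do not
change the commutators `[uᵢ, vᵢ]`, and they pull out of the products as the single factor
`h^{-∑ kⱼ}`; the relations of `π` then turn both new relations into identities between powers of
`h`, whose exponents agree by `r b = 2g - 2 - ∑ kⱼ` and `r βⱼ = αⱼ - 1 + kⱼ αⱼ`.
-/

section CentralTwist

variable {G : Type*} [Group G]

theorem commutatorElement_mul_left_of_mem_center {c : G} (hc : c ∈ Subgroup.center G) (a b : G) :
    ⁅a * c, b⁆ = ⁅a, b⁆ := by
  have hcb : c * b * c⁻¹ = b := by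
    rw [mul_inv_eq_iff_eq_mul, Subgroup.mem_center_iff.mp hc b]
  calc ⁅a * c, b⁆ = a * (c * b * c⁻¹) * a⁻¹ * b⁻¹ := by simp only [commutatorElement_def]; group
    _ = ⁅a, b⁆ := by rw [hcb, commutatorElement_def]

theorem commutatorElement_mul_mul_of_mem_center {c d : G} (hc : c ∈ Subgroup.center G)
    (hd : d ∈ Subgroup.center G) (a b : G) : ⁅a * c, b * d⁆ = ⁅a, b⁆ := by
  rw [commutatorElement_mul_left_of_mem_center hc, ← commutatorElement_inv,
    commutatorElement_mul_left_of_mem_center hd, commutatorElement_inv]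

theorem List.prod_map_mul_zpow_of_mem_center {ι : Type*} {h : G} (hh : h ∈ Subgroup.center G)
    (x : ι → G) (e : ι → ℤ) (l : List ι) :
    (l.map fun j => x j * h ^ e j).prod = (l.map x).prod * h ^ (l.map e).sum := by
  induction l with
  | nil => simp
  | cons a l ih =>
    have hcomm : h ^ e a * (l.map x).prod = (l.map x).prod * h ^ e a :=
      (Subgroup.mem_center_iff.mp (Subgroup.zpow_mem _ hh _) _).symm
    simp only [List.map_cons, List.prod_cons, List.sum_cons, ih, zpow_add]
    rw [mul_assoc (x a), ← mul_assoc (h ^ e a), hcomm]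
    simp only [mul_assoc]

end CentralTwist

section ZModValued

variable {G : Type*} [Group G] {r : ℕ} (δ : G →* Multiplicative (ZMod r)) {h : G}
  (hδ : δ h = Multiplicative.ofAdd 1)
include hδ

theorem map_zpow_eq_ofAdd_intCast (m : ℤ) : δ (h ^ m) = Multiplicative.ofAdd (m : ZMod r) := by
  rw [map_zpow, hδ, ← ofAdd_zsmul, zsmul_one]

theorem mul_zpow_neg_mem_ker {x : G} {m : ℤ} (hx : δ x = Multiplicative.ofAdd (m : ZMod r)) :
    x * h ^ (-m) ∈ δ.ker := by
  rw [MonoidHom.mem_ker, map_mul, hx, map_zpow_eq_ofAdd_intCast δ hδ, ← ofAdd_add]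
  simp

theorem zpow_natCast_mem_ker : h ^ (r : ℤ) ∈ δ.ker := by
  rw [MonoidHom.mem_ker, map_zpow_eq_ofAdd_intCast δ hδ]
  simp

end ZModValued

namespace STPi

variable {g n : ℕ} {α : Fin n → ℕ}

theorem of_h_mem_center : (PresentedGroup.of STGen.h : STPi g n α) ∈ Subgroup.center _ := by
  rw [← Subgroup.centralizer_univ, ← Subgroup.coe_top, ← PresentedGroup.closure_range_of,
    Subgroup.centralizer_closure, Subgroup.mem_centralizer_iff_commutator_eq_one']
  rintro _ ⟨x, rfl⟩
  exact PresentedGroup.one_of_mem (Or.inl ⟨x, rfl⟩)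

theorem surface_relation :
    ((List.finRange g).map fun i =>
        ⁅(PresentedGroup.of (STGen.u i) : STPi g n α), PresentedGroup.of (STGen.v i)⁆).prod *
      ((List.finRange n).map fun j => (PresentedGroup.of (STGen.q j) : STPi g n α)).prod =
      PresentedGroup.of STGen.h ^ (2 * (g : ℤ) - 2) := by
  have hrel := PresentedGroup.one_of_mem (rels := STRels g n α) (Or.inr (Or.inl rfl))
  simp only [map_mul, map_zpow, map_list_prod, List.map_map, Function.comp_def,
    map_commutatorElement] at hrel
  rwa [zpow_neg, mul_inv_eq_one] at hrel

theorem of_q_zpow {j : Fin n} (hα : 1 ≤ α j) :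
    (PresentedGroup.of (STGen.q j) : STPi g n α) ^ (α j : ℤ) =
      PresentedGroup.of STGen.h ^ (1 - (α j : ℤ)) := by
  have hrel := PresentedGroup.one_of_mem (rels := STRels g n α) (Or.inr (Or.inr ⟨j, rfl⟩))
  rw [map_mul, map_pow, map_pow, mul_eq_one_iff_eq_inv, ← zpow_natCast, ← zpow_natCast,
    ← zpow_neg, Nat.cast_sub hα, Nat.cast_one, neg_sub] at hrel
  exact hrel

end STPi

theorem kernel_presentation_relations_general (g n : ℕ) (α : Fin n → ℕ) (hα : ∀ j, 2 ≤ α j)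
    (r : ℕ)
    (δ : STPi g n α →* Multiplicative (ZMod r))
    (hδh : δ (PresentedGroup.of STGen.h) = Multiplicative.ofAdd 1)
    (s t : Fin g → ℤ) (k : Fin n → ℤ) (b : ℤ) (β : Fin n → ℤ)
    (hs : ∀ i, δ (PresentedGroup.of (STGen.u i)) = Multiplicative.ofAdd ((s i : ZMod r)))
    (ht : ∀ i, δ (PresentedGroup.of (STGen.v i)) = Multiplicative.ofAdd ((t i : ZMod r)))
    (hk : ∀ j, δ (PresentedGroup.of (STGen.q j)) = Multiplicative.ofAdd ((k j : ZMod r)))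
    (hb : (r : ℤ) * b = 2 * (g : ℤ) - 2 - ∑ j, k j)
    (hβ : ∀ j, (r : ℤ) * β j = (α j : ℤ) - 1 + k j * (α j : ℤ)) :
    -- the elements ũᵢ, ṽᵢ, q̃ⱼ, h̃ of π
    (∀ i, (PresentedGroup.of (STGen.u i) * (PresentedGroup.of (STGen.h : STGen g n)) ^ (-(s i)) : STPi g n α) ∈ δ.ker) ∧
    (∀ i, (PresentedGroup.of (STGen.v i) * (PresentedGroup.of (STGen.h : STGen g n)) ^ (-(t i)) : STPi g n α) ∈ δ.ker) ∧
    (∀ j, (PresentedGroup.of (STGen.q j) * (PresentedGroup.of (STGen.h : STGen g n)) ^ (-(k j)) : STPi g n α) ∈ δ.ker) ∧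
    ((PresentedGroup.of (STGen.h : STGen g n) : STPi g n α) ^ (r : ℤ) ∈ δ.ker) ∧
    -- h̃ is central
    (∀ x : STPi g n α,
      (PresentedGroup.of (STGen.h : STGen g n) : STPi g n α) ^ (r : ℤ) * x =
        x * (PresentedGroup.of (STGen.h : STGen g n) : STPi g n α) ^ (r : ℤ)) ∧
    -- the long relation ∏[ũᵢ,ṽᵢ]∏q̃ⱼ = h̃^b
    (((List.finRange g).map fun i =>
        ⁅(PresentedGroup.of (STGen.u i) * (PresentedGroup.of (STGen.h : STGen g n)) ^ (-(s i)) : STPi g n α),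
          PresentedGroup.of (STGen.v i) * (PresentedGroup.of (STGen.h : STGen g n)) ^ (-(t i))⁆).prod *
      ((List.finRange n).map fun j =>
        (PresentedGroup.of (STGen.q j) * (PresentedGroup.of (STGen.h : STGen g n)) ^ (-(k j)) : STPi g n α)).prod =
      ((PresentedGroup.of (STGen.h : STGen g n) : STPi g n α) ^ (r : ℤ)) ^ b) ∧
    -- the torsion relations q̃ⱼ^{αⱼ} h̃^{βⱼ} = 1
    (∀ j, (PresentedGroup.of (STGen.q j) * (PresentedGroup.of (STGen.h : STGen g n)) ^ (-(k j)) : STPi g n α) ^ (α j : ℤ) *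
        ((PresentedGroup.of (STGen.h : STGen g n) : STPi g n α) ^ (r : ℤ)) ^ (β j) = 1) := by
  have hH := STPi.of_h_mem_center (g := g) (α := α)
  have hHpow (m : ℤ) := Subgroup.zpow_mem _ hH m
  refine ⟨fun i => mul_zpow_neg_mem_ker δ hδh (hs i), fun i => mul_zpow_neg_mem_ker δ hδh (ht i),
    fun j => mul_zpow_neg_mem_ker δ hδh (hk j), zpow_natCast_mem_ker δ hδh,
    fun x => (Subgroup.mem_center_iff.mp (hHpow r) x).symm, ?_, fun j => ?_⟩
  · have hsum : ((List.finRange n).map fun j => -k j).sum = -∑ j, k j := by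
      rw [← Fin.sum_univ_def, Finset.sum_neg_distrib]
    rw [List.map_congr_left fun i _ =>
        commutatorElement_mul_mul_of_mem_center (hHpow _) (hHpow _) _ _,
      List.prod_map_mul_zpow_of_mem_center hH, hsum, ← mul_assoc, STPi.surface_relation,
      ← zpow_add, ← zpow_mul]
    congr 1
    linarith
  · have hcomm : Commute (PresentedGroup.of (STGen.q j) : STPi g n α)
        (PresentedGroup.of STGen.h ^ (-k j)) :=
      Subgroup.mem_center_iff.mp (hHpow _) _
    rw [hcomm.mul_zpow, STPi.of_q_zpow (one_le_two.trans (hα j)), ← zpow_mul, ← zpow_mul,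
      ← zpow_add, ← zpow_add, ← zpow_zero (PresentedGroup.of STGen.h : STPi g n α)]
    congr 1
    linarith [hβ j]

theorem kernel_presentation_relations (g n : ℕ) (α : Fin n → ℕ) (hα : ∀ j, 2 ≤ α j)
    (r : ℕ) (hr : 0 < r)
    (δ : STPi g n α →* Multiplicative (ZMod r))
    (hδh : δ (PresentedGroup.of STGen.h) = Multiplicative.ofAdd 1)
    (s t : Fin g → ℤ) (k : Fin n → ℤ) (b : ℤ) (β : Fin n → ℤ)
    (hs : ∀ i, δ (PresentedGroup.of (STGen.u i)) = Multiplicative.ofAdd ((s i : ZMod r)))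
    (ht : ∀ i, δ (PresentedGroup.of (STGen.v i)) = Multiplicative.ofAdd ((t i : ZMod r)))
    (hk : ∀ j, δ (PresentedGroup.of (STGen.q j)) = Multiplicative.ofAdd ((k j : ZMod r)))
    (hb : (r : ℤ) * b = 2 * (g : ℤ) - 2 - ∑ j, k j)
    (hβ : ∀ j, (r : ℤ) * β j = (α j : ℤ) - 1 + k j * (α j : ℤ)) :
    -- the elements ũᵢ, ṽᵢ, q̃ⱼ, h̃ of π
    (∀ i, (PresentedGroup.of (STGen.u i) * (PresentedGroup.of (STGen.h : STGen g n)) ^ (-(s i)) : STPi g n α) ∈ δ.ker) ∧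
    (∀ i, (PresentedGroup.of (STGen.v i) * (PresentedGroup.of (STGen.h : STGen g n)) ^ (-(t i)) : STPi g n α) ∈ δ.ker) ∧
    (∀ j, (PresentedGroup.of (STGen.q j) * (PresentedGroup.of (STGen.h : STGen g n)) ^ (-(k j)) : STPi g n α) ∈ δ.ker) ∧
    ((PresentedGroup.of (STGen.h : STGen g n) : STPi g n α) ^ (r : ℤ) ∈ δ.ker) ∧
    -- h̃ is central
    (∀ x : STPi g n α,
      (PresentedGroup.of (STGen.h : STGen g n) : STPi g n α) ^ (r : ℤ) * x =
        x * (PresentedGroup.of (STGen.h : STGen g n) : STPi g n α) ^ (r : ℤ)) ∧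
    -- the long relation ∏[ũᵢ,ṽᵢ]∏q̃ⱼ = h̃^b
    (((List.finRange g).map fun i =>
        ⁅(PresentedGroup.of (STGen.u i) * (PresentedGroup.of (STGen.h : STGen g n)) ^ (-(s i)) : STPi g n α),
          PresentedGroup.of (STGen.v i) * (PresentedGroup.of (STGen.h : STGen g n)) ^ (-(t i))⁆).prod *
      ((List.finRange n).map fun j =>
        (PresentedGroup.of (STGen.q j) * (PresentedGroup.of (STGen.h : STGen g n)) ^ (-(k j)) : STPi g n α)).prod =
      ((PresentedGroup.of (STGen.h : STGen g n) : STPi g n α) ^ (r : ℤ)) ^ b) ∧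
    -- the torsion relations q̃ⱼ^{αⱼ} h̃^{βⱼ} = 1
    (∀ j, (PresentedGroup.of (STGen.q j) * (PresentedGroup.of (STGen.h : STGen g n)) ^ (-(k j)) : STPi g n α) ^ (α j : ℤ) *
        ((PresentedGroup.of (STGen.h : STGen g n) : STPi g n α) ^ (r : ℤ)) ^ (β j) = 1) :=
  kernel_presentation_relations_general g n α hα r δ hδh s t k b β hs ht hk hb hβ
end
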